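/- arXiv:2601.04193 — 5 statements merged into one kernel-verified Lean document; each statement's English description precedes it below -/
import Mathlib

section
/- Let G be a rooted tree and let d denote the shortest-path distance on its underlying undirected graph. For any two probability distributions f0, f1 on the vertex set V, the Wasserstein-1 distance satisfies W1(f0, f1) = Σ_{x∈V} |F1_x − F0_x|, where F0_x and F1_x denote the tails of f0 and f1 past x. -/
open scoped BigOperators
open Set

/-- A probability distribution on a finite set. -/
def IsProbDist {S : Type*} [Fintype S] (f : S → ℝ) : Prop :=
  (∀ s, 0 ≤ f s) ∧ ∑ s, f s = 1

/-- A coupling of two distributions on a finite set. -/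
def IsCoupling {V : Type*} [Fintype V] (f0 f1 : V → ℝ) (π : V → V → ℝ) : Prop :=
  (∀ x y, 0 ≤ π x y) ∧ (∀ x, ∑ y, π x y = f0 x) ∧ (∀ y, ∑ x, π x y = f1 y)

/-- Wasserstein-1 distance w.r.t. the shortest-path distance of a graph. -/
noncomputable def W1 {V : Type*} [Fintype V] (T : SimpleGraph V) (f0 f1 : V → ℝ) : ℝ :=
  sInf {c : ℝ | ∃ π : V → V → ℝ, IsCoupling f0 f1 π ∧
    c = ∑ x, ∑ y, (T.dist x y : ℝ) * π x y}

/-- The tail of `f` past `x` in a tree rooted at `r`: the sum of `f y` over the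
vertices `y` such that the unique path from `r` to `y` passes through `x`
(equivalently, `dist r x + dist x y = dist r y`). -/
noncomputable def tailSum {V : Type*} [Fintype V] (T : SimpleGraph V) (r : V)
    (f : V → ℝ) (x : V) : ℝ :=
  ∑ y, if T.dist r x + T.dist x y = T.dist r y then f y else 0

/-- The energy functional `I_q`. -/
noncomputable def Iq {E : Type*} [Fintype E] (q : ℝ) (v g : ℝ → E → ℝ) : ℝ :=
  (∫ t in (0:ℝ)..1, ∑ k, g t k * |v t k| ^ q) ^ (1 / q)

/-- A finite directed graph on vertex type `V` with edge type `E`. -/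
structure DiGraph (V E : Type*) where
  tail : E → V
  head : E → V
  ne : ∀ k, tail k ≠ head k

namespace DiGraph

variable {V E : Type*}

/-- The signed incidence matrix. -/
def incidence [DecidableEq V] (G : DiGraph V E) (x : V) (k : E) : ℝ :=
  if G.head k = x then 1 else if G.tail k = x then -1 else 0

/-- The underlying undirected simple graph. -/
def toSimpleGraph (G : DiGraph V E) : SimpleGraph V where
  Adj x y := x ≠ y ∧ ∃ k, (G.tail k = x ∧ G.head k = y) ∨ (G.tail k = y ∧ G.head k = x)
  symm := ⟨by rintro x y ⟨hne, k, h⟩; exact ⟨hne.symm, k, h.symm⟩⟩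
  loopless := ⟨by rintro x ⟨hne, -⟩; exact hne rfl⟩

/-- `G` is a rooted tree with root `r`: the underlying graph is a tree, and every
edge is oriented away from the root. -/
def IsRootedTree (G : DiGraph V E) (r : V) : Prop :=
  G.toSimpleGraph.IsTree ∧
  ∀ k, G.toSimpleGraph.dist r (G.head k) = G.toSimpleGraph.dist r (G.tail k) + 1

end DiGraph

/-- A solution `(f, v, g)` of the discrete transport equation on `[0,1]`. -/
structure TransportSolution {V E : Type*} [Fintype V] [Fintype E] [DecidableEq V]
    (G : DiGraph V E) where
  f : ℝ → V → ℝ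
  v : ℝ → E → ℝ
  g : ℝ → E → ℝ
  f_prob : ∀ t ∈ Icc (0:ℝ) 1, IsProbDist (f t)
  g_prob : ∀ t ∈ Icc (0:ℝ) 1, IsProbDist (g t)
  v_cont : ContinuousOn (fun t => v t) (Icc (0:ℝ) 1)
  g_cont : ContinuousOn (fun t => g t) (Icc (0:ℝ) 1)
  transport : ∀ x : V, ∀ t ∈ Icc (0:ℝ) 1,
    HasDerivWithinAt (fun s => f s x) (∑ k, G.incidence x k * v t k * g t k) (Icc (0:ℝ) 1) t

/-!
Lower bound: in a tree, each edge of a geodesic from `x` to `y` changes the set of ancestors by a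
single vertex, so `dist x y ≥ Σ_z |[z ≤ y] - [z ≤ x]|`; since for a coupling `π` one has
`F1_z - F0_z = Σ_{x,y} π(x,y) ([z ≤ y] - [z ≤ x])`, every coupling costs at least
`Σ_z |F1_z - F0_z|`.

Upper bound, by induction: at a deepest vertex `x` where `f0` and `f1` differ, the tails past `x`
differ by exactly `δ = f0 x - f1 x`. Moving `δ` from `x` to its parent corrects the tail past `x`
and changes no other tail, and a coupling of the modified distribution with `f1` becomes one of `f0`
at extra cost `δ` by letting part of the mass that leaves the parent leave from `x` instead.
-/

section Coupling

variable {V : Type*} [Fintype V]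

lemma IsCoupling.transpose {f g : V → ℝ} {π : V → V → ℝ} (hπ : IsCoupling f g π) :
    IsCoupling g f (fun x y => π y x) :=
  ⟨fun x y => hπ.1 y x, hπ.2.2, hπ.2.1⟩

lemma isCoupling_diag [DecidableEq V] {f : V → ℝ} (hf : ∀ x, 0 ≤ f x) :
    IsCoupling f f (fun x y => if x = y then f x else 0) := by
  refine ⟨fun x y => ?_, fun x => by simp, fun y => by simp⟩
  dsimp only
  split_ifs
  exacts [hf x, le_rfl]

end Coupling

namespace SimpleGraph

open Finset

variable {V : Type*} {T : SimpleGraph V}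

/-- In a tree rooted at `r`: `y ∈ U(x)`, the condition in `tailSum`. -/
def IsAncestor (T : SimpleGraph V) (r x y : V) : Prop :=
  T.dist r x + T.dist x y = T.dist r y

noncomputable instance (T : SimpleGraph V) (r x y : V) : Decidable (T.IsAncestor r x y) :=
  inferInstanceAs (Decidable (_ = _))

lemma Reachable.exists_adj_dist_add_one {u v : V} (h : T.Reachable u v) (hne : u ≠ v) :
    ∃ w, T.Adj w v ∧ T.dist u w + 1 = T.dist u v := by
  obtain ⟨W, hW⟩ := h.exists_walk_length_eq_dist
  have hW0 : ¬W.Nil := fun hnil => hne hnil.eq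
  have hadj := W.adj_penultimate hW0
  refine ⟨W.penultimate, hadj, le_antisymm ?_ ?_⟩
  · have := T.dist_le W.dropLast
    have := Walk.length_dropLast_add_one hW0
    omega
  · have := hadj.reachable.dist_triangle_right u
    rwa [dist_eq_one_iff_adj.mpr hadj] at this

lemma IsTree.eq_of_adj_of_dist_add_one (hT : T.IsTree) {r w w' v : V} (hw : T.Adj w v)
    (hw' : T.Adj w' v) (hdw : T.dist r w + 1 = T.dist r v)
    (hdw' : T.dist r w' + 1 = T.dist r v) : w = w' := by
  obtain ⟨P, hP⟩ := hT.connected.exists_walk_length_eq_dist r w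
  obtain ⟨P', hP'⟩ := hT.connected.exists_walk_length_eq_dist r w'
  have hQ := (P.concat hw).isPath_of_length_eq_dist (by rw [Walk.length_concat, hP, hdw])
  have hQ' := (P'.concat hw').isPath_of_length_eq_dist (by rw [Walk.length_concat, hP', hdw'])
  have := (hT.isAcyclic.subsingleton_path r v).elim ⟨_, hQ⟩ ⟨_, hQ'⟩
  exact (Walk.concat_inj (Subtype.ext_iff.mp this)).1

lemma IsTree.isAncestor_iff_of_parent (hT : T.IsTree) {r u v z : V} (hadj : T.Adj u v)
    (hd : T.dist r u + 1 = T.dist r v) :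
    T.IsAncestor r z v ↔ T.IsAncestor r z u ∨ z = v := by
  have hconn := hT.connected
  have huv : T.dist u v = 1 := dist_eq_one_iff_adj.mpr hadj
  unfold IsAncestor
  constructor
  · intro hzv
    by_cases hz : z = v
    · exact Or.inr hz
    -- the last edge `w v` of a geodesic from `z` to `v` enters `v` from its parent
    obtain ⟨w, hwv, hzw⟩ := (hconn z v).exists_adj_dist_add_one hz
    have hwu : w = u := by
      refine hT.eq_of_adj_of_dist_add_one hwv hadj (le_antisymm ?_ ?_) hd
      · have := hconn.dist_triangle (u := r) (v := z) (w := w)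
        omega
      · have := hconn.dist_triangle (u := r) (v := w) (w := v)
        rw [dist_eq_one_iff_adj.mpr hwv] at this
        omega
    subst hwu
    have := hconn.dist_triangle (u := r) (v := z) (w := w)
    omega
  · rintro (hzu | rfl)
    · have := hconn.dist_triangle (u := z) (v := u) (w := v)
      have := hconn.dist_triangle (u := r) (v := z) (w := v)
      omega
    · simp

noncomputable def ancestorIndicator (T : SimpleGraph V) (r x z : V) : ℝ :=
  if T.IsAncestor r z x then 1 else 0

lemma IsTree.ancestorIndicator_sub_of_parent [DecidableEq V] (hT : T.IsTree) {r u v : V}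
    (hadj : T.Adj u v) (hd : T.dist r u + 1 = T.dist r v) (z : V) :
    T.ancestorIndicator r v z - T.ancestorIndicator r u z = if z = v then 1 else 0 := by
  have hvu : ¬T.IsAncestor r v u := by unfold IsAncestor; omega
  simp only [ancestorIndicator, hT.isAncestor_iff_of_parent hadj hd]
  by_cases hzv : z = v
  · subst hzv; simp [hvu]
  · by_cases hzu : T.IsAncestor r z u <;> simp [hzu, hzv]

variable [Fintype V]

lemma IsTree.sum_abs_ancestorIndicator_sub_of_adj [DecidableEq V] (hT : T.IsTree) (r : V)
    {u v : V} (hadj : T.Adj u v) :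
    ∑ z, |T.ancestorIndicator r v z - T.ancestorIndicator r u z| = 1 := by
  rcases hT.dist_eq_dist_add_one_of_adj r hadj with hd | hd
  · simp_rw [abs_sub_comm (T.ancestorIndicator r v _),
      hT.ancestorIndicator_sub_of_parent hadj.symm hd.symm]
    simp [apply_ite]
  · simp_rw [hT.ancestorIndicator_sub_of_parent hadj hd.symm]
    simp [apply_ite]

lemma IsTree.sum_abs_ancestorIndicator_sub_le_length [DecidableEq V] (hT : T.IsTree) (r : V)
    {x y : V} (W : T.Walk x y) :
    ∑ z, |T.ancestorIndicator r y z - T.ancestorIndicator r x z| ≤ W.length := by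
  induction W with
  | nil => simp
  | @cons x w y hadj W ih =>
    calc ∑ z, |T.ancestorIndicator r y z - T.ancestorIndicator r x z|
        ≤ ∑ z, (|T.ancestorIndicator r y z - T.ancestorIndicator r w z|
            + |T.ancestorIndicator r w z - T.ancestorIndicator r x z|) :=
          sum_le_sum fun z _ => abs_sub_le _ _ _
      _ ≤ W.length + 1 := by
          rw [sum_add_distrib, hT.sum_abs_ancestorIndicator_sub_of_adj r hadj]
          gcongr
      _ = (W.cons hadj).length := by simp

lemma IsTree.sum_abs_ancestorIndicator_sub_le_dist [DecidableEq V] (hT : T.IsTree) (r x y : V) :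
    ∑ z, |T.ancestorIndicator r y z - T.ancestorIndicator r x z| ≤ T.dist x y := by
  obtain ⟨W, hW⟩ := hT.connected.exists_walk_length_eq_dist x y
  exact hW ▸ hT.sum_abs_ancestorIndicator_sub_le_length r W

noncomputable def transportCost (T : SimpleGraph V) (π : V → V → ℝ) : ℝ :=
  ∑ x, ∑ y, (T.dist x y : ℝ) * π x y

noncomputable def tailDistance (T : SimpleGraph V) (r : V) (f g : V → ℝ) : ℝ :=
  ∑ x, |tailSum T r g x - tailSum T r f x|

lemma tailDistance_comm (T : SimpleGraph V) (r : V) (f g : V → ℝ) :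
    T.tailDistance r f g = T.tailDistance r g f := by
  simp only [tailDistance, abs_sub_comm]

lemma transportCost_transpose (T : SimpleGraph V) (π : V → V → ℝ) :
    T.transportCost (fun x y => π y x) = T.transportCost π := by
  rw [transportCost, sum_comm]
  simp only [transportCost, dist_comm]

lemma transportCost_diag [DecidableEq V] (T : SimpleGraph V) (f : V → ℝ) :
    T.transportCost (fun x y => if x = y then f x else 0) = 0 := by
  simp [transportCost]

lemma tailSum_eq_sum_ancestorIndicator (T : SimpleGraph V) (r : V) (f : V → ℝ) (z : V) :
    tailSum T r f z = ∑ y, T.ancestorIndicator r y z * f y := by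
  simp only [tailSum, ancestorIndicator, boole_mul]
  rfl

lemma tailSum_root (T : SimpleGraph V) (r : V) (f : V → ℝ) : tailSum T r f r = ∑ y, f y := by
  simp [tailSum]

lemma _root_.IsCoupling.tailSum_sub_tailSum {f g : V → ℝ} {π : V → V → ℝ}
    (hπ : IsCoupling f g π) (r z : V) :
    tailSum T r g z - tailSum T r f z
      = ∑ x, ∑ y, π x y * (T.ancestorIndicator r y z - T.ancestorIndicator r x z) := by
  simp only [tailSum_eq_sum_ancestorIndicator, ← hπ.2.1, ← hπ.2.2, mul_sum]
  rw [sum_comm (f := fun y x => _ * π x y)]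
  simp only [mul_sub, sum_sub_distrib, mul_comm]

lemma IsTree.tailDistance_le_transportCost [DecidableEq V] (hT : T.IsTree) (r : V)
    {f g : V → ℝ} {π : V → V → ℝ} (hπ : IsCoupling f g π) :
    T.tailDistance r f g ≤ T.transportCost π := by
  calc T.tailDistance r f g
      = ∑ z, |∑ x, ∑ y, π x y * (T.ancestorIndicator r y z - T.ancestorIndicator r x z)| := by
        simp only [tailDistance, hπ.tailSum_sub_tailSum]
    _ ≤ ∑ z, ∑ x, ∑ y, π x y * |T.ancestorIndicator r y z - T.ancestorIndicator r x z| := by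
        gcongr with z
        refine (abs_sum_le_sum_abs _ _).trans (sum_le_sum fun x _ => ?_)
        refine (abs_sum_le_sum_abs _ _).trans (le_of_eq (sum_congr rfl fun y _ => ?_))
        rw [abs_mul, abs_of_nonneg (hπ.1 x y)]
    _ = ∑ x, ∑ y, π x y * ∑ z, |T.ancestorIndicator r y z - T.ancestorIndicator r x z| := by
        simp only [mul_sum]
        rw [sum_comm]
        exact sum_congr rfl fun x _ => sum_comm
    _ ≤ T.transportCost π := by
        refine sum_le_sum fun x _ => sum_le_sum fun y _ => ?_
        rw [mul_comm]
        exact mul_le_mul_of_nonneg_right (hT.sum_abs_ancestorIndicator_sub_le_dist r x y)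
          (hπ.1 x y)

lemma _root_.IsCoupling.exists_move_mass [DecidableEq V] {g f : V → ℝ} {π : V → V → ℝ}
    (hπ : IsCoupling g f π) {p x : V} (hpx : T.Reachable p x) {δ : ℝ} (hδ : 0 ≤ δ)
    (hδp : δ ≤ g p) :
    ∃ π', IsCoupling (g - Pi.single p δ + Pi.single x δ) f π' ∧
      T.transportCost π' ≤ T.transportCost π + δ * T.dist p x := by
  obtain ⟨hπ0, hrow, hcol⟩ := hπ
  -- the fraction of the mass leaving `p` that is sent from `x` instead
  set t := δ / g p
  have ht0 : 0 ≤ t := div_nonneg hδ (hδ.trans hδp)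
  have ht1 : t ≤ 1 := div_le_one_of_le₀ hδp (hδ.trans hδp)
  have htg : t * g p = δ := by
    rcases (hδ.trans hδp).eq_or_lt with h | h
    · simp [t, ← h, le_antisymm (h ▸ hδp) hδ]
    · exact div_mul_cancel₀ δ h.ne'
  refine ⟨fun z w => π z w + (if z = x then t * π p w else 0) - (if z = p then t * π p w else 0),
    ⟨fun z w => ?_, fun z => ?_, fun w => ?_⟩, ?_⟩
  · have := hπ0 z w
    have := hπ0 p w
    by_cases hzx : z = x <;> by_cases hzp : z = p <;> subst_vars <;> simp [*] <;> nlinarith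
  · by_cases hzx : z = x <;> by_cases hzp : z = p <;> subst_vars <;>
      simp [*, sum_add_distrib, sum_sub_distrib, ← mul_sum]
  · simp [sum_add_distrib, sum_sub_distrib, hcol]
  · have htri : ∀ w, (T.dist x w : ℝ) ≤ T.dist p x + T.dist p w := fun w => by
      rw [dist_comm (u := p)]
      exact_mod_cast hpx.symm.dist_triangle_left w
    calc T.transportCost _
        = T.transportCost π + ∑ w, t * π p w * (T.dist x w - T.dist p w) := by
          simp only [transportCost, mul_add, mul_sub, sum_add_distrib, sum_sub_distrib, mul_ite,
            mul_zero, sum_ite_irrel, sum_const_zero, sum_ite_eq', Finset.mem_univ, if_true]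
          simp only [mul_comm]
          ring
      _ ≤ T.transportCost π + ∑ w, t * π p w * T.dist p x := by
          gcongr with w
          · exact mul_nonneg ht0 (hπ0 p w)
          · linarith [htri w]
      _ = T.transportCost π + δ * T.dist p x := by
          rw [← sum_mul, ← mul_sum, hrow, htg]

lemma IsTree.tailSum_push_to_parent [DecidableEq V] (hT : T.IsTree) {r p x : V}
    (hadj : T.Adj p x) (hp : T.dist r p + 1 = T.dist r x) (f : V → ℝ) (δ : ℝ) (z : V) :
    tailSum T r (f - Pi.single x δ + Pi.single p δ) z
      = tailSum T r f z - if z = x then δ else 0 := by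
  have := hT.ancestorIndicator_sub_of_parent hadj hp z
  simp only [tailSum_eq_sum_ancestorIndicator, Pi.add_apply, Pi.sub_apply, mul_add, mul_sub,
    sum_add_distrib, sum_sub_distrib, Pi.single_apply, mul_ite, mul_zero, sum_ite_eq',
    Finset.mem_univ, if_true]
  split_ifs at this ⊢ <;> linear_combination -δ * this

lemma Connected.tailSum_sub_tailSum_of_eq_of_dist_lt (hT : T.Connected) {r x : V}
    {f g : V → ℝ} (h : ∀ y, T.dist r x < T.dist r y → f y = g y) :
    tailSum T r f x - tailSum T r g x = f x - g x := by
  rw [tailSum, tailSum, ← sum_sub_distrib, sum_eq_single x]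
  · simp
  · intro y _ hyx
    split_ifs with hxy
    · rw [h y (by have := hT.pos_dist_of_ne (Ne.symm hyx); omega), sub_self]
    · exact sub_self 0
  · simp

open Classical in
/-- Termination measure for the upper bound: pushing the discrepancy at `x` to its parent trades
weight `dist r x + 1` for at most `dist r x`. -/
noncomputable def discrepancyWeight (T : SimpleGraph V) (r : V) (f g : V → ℝ) : ℕ :=
  ∑ z ∈ univ.filter (fun z => f z ≠ g z), (T.dist r z + 1)

lemma discrepancyWeight_comm (T : SimpleGraph V) (r : V) (f g : V → ℝ) :
    T.discrepancyWeight r f g = T.discrepancyWeight r g f := by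
  simp only [discrepancyWeight, ne_comm]

lemma discrepancyWeight_lt {r x p : V} {f f' g : V → ℝ} (hx : f x ≠ g x) (hx' : f' x = g x)
    (hf' : ∀ z, z ≠ x → z ≠ p → f' z = f z) (hp : T.dist r p + 1 = T.dist r x) :
    T.discrepancyWeight r f' g < T.discrepancyWeight r f g := by
  classical
  unfold discrepancyWeight
  set D := univ.filter (fun z => f z ≠ g z)
  have hxD : x ∈ D := by simp [D, hx]
  have hsub : univ.filter (fun z => f' z ≠ g z) ⊆ insert p (D.erase x) := by
    intro z hz
    simp only [Finset.mem_filter, Finset.mem_univ, true_and] at hz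
    have hzx : z ≠ x := by rintro rfl; exact hz hx'
    by_cases hzp : z = p
    · exact hzp ▸ mem_insert_self _ _
    · simp [D, hzx, ← hf' z hzx hzp, hz]
  calc ∑ z ∈ univ.filter (fun z => f' z ≠ g z), (T.dist r z + 1)
      ≤ ∑ z ∈ insert p (D.erase x), (T.dist r z + 1) := sum_le_sum_of_subset hsub
    _ ≤ (T.dist r p + 1) + ∑ z ∈ D.erase x, (T.dist r z + 1) := by
        by_cases hp' : p ∈ D.erase x
        · rw [Finset.insert_eq_of_mem hp']; omega
        · rw [sum_insert hp']
    _ < ∑ z ∈ D, (T.dist r z + 1) := by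
        rw [← add_sum_erase D _ hxD]; omega

lemma IsTree.exists_coupling_of_push_to_parent [DecidableEq V] (hT : T.IsTree) (r : V)
    {f0 f1 : V → ℝ} (h0 : ∀ z, 0 ≤ f0 z) (h1 : ∀ z, 0 ≤ f1 z) {p x : V} (hadj : T.Adj p x)
    (hp : T.dist r p + 1 = T.dist r x) (hdeep : ∀ y, T.dist r x < T.dist r y → f0 y = f1 y)
    (hlt : f1 x < f0 x)
    (ih : ∀ g : V → ℝ, (∀ z, 0 ≤ g z) → ∑ z, g z = ∑ z, f0 z →
      T.discrepancyWeight r g f1 < T.discrepancyWeight r f0 f1 →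
      ∃ π, IsCoupling g f1 π ∧ T.transportCost π ≤ T.tailDistance r g f1) :
    ∃ π, IsCoupling f0 f1 π ∧ T.transportCost π ≤ T.tailDistance r f0 f1 := by
  set δ := f0 x - f1 x
  set g := f0 - Pi.single x δ + Pi.single p δ
  have hpx : p ≠ x := hadj.ne
  have hgx : g x = f1 x := by simp [g, δ, hpx.symm]
  have hgp : g p = f0 p + δ := by simp [g, hpx]
  have hg : ∀ z, 0 ≤ g z := fun z => by
    by_cases hzx : z = x
    · exact hzx ▸ hgx ▸ h1 x
    · by_cases hzp : z = p
      · rw [hzp, hgp]; linarith [h0 p]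
      · simpa [g, hzx, hzp] using h0 z
  obtain ⟨π, hπ, hcost⟩ := ih g hg (by simp [g, sum_add_distrib, sum_sub_distrib])
    (discrepancyWeight_lt hlt.ne' hgx (fun z hzx hzp => by simp [g, hzx, hzp]) hp)
  have hdist : T.tailDistance r f0 f1 = T.tailDistance r g f1 + δ := by
    have hx : tailSum T r f0 x - tailSum T r f1 x = δ :=
      hT.connected.tailSum_sub_tailSum_of_eq_of_dist_lt hdeep
    have hpt : ∀ z, |tailSum T r f1 z - tailSum T r f0 z|
        = |tailSum T r f1 z - tailSum T r g z| + if z = x then δ else 0 := fun z => by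
      rw [hT.tailSum_push_to_parent hadj hp]
      split_ifs with hzx
      · subst hzx
        rw [show tailSum T r f1 z - (tailSum T r f0 z - δ) = 0 by linarith, abs_zero, zero_add,
          abs_sub_comm, hx, abs_of_pos (sub_pos.mpr hlt)]
      · simp
    simp only [tailDistance, hpt, sum_add_distrib, sum_ite_eq', Finset.mem_univ, if_true]
  have hf0 : g - Pi.single p δ + Pi.single x δ = f0 := by
    ext z; simp only [g, Pi.add_apply, Pi.sub_apply]; ring
  obtain ⟨π', hπ', hcost'⟩ := hπ.exists_move_mass hadj.reachable (sub_pos.mpr hlt).le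
    (by linarith [h0 p])
  rw [hf0] at hπ'
  rw [dist_eq_one_iff_adj.mpr hadj] at hcost'
  exact ⟨π', hπ', by push_cast at hcost'; linarith⟩

theorem IsTree.exists_coupling_transportCost_le_tailDistance [DecidableEq V] (hT : T.IsTree)
    (r : V) {f0 f1 : V → ℝ} (h0 : ∀ z, 0 ≤ f0 z) (h1 : ∀ z, 0 ≤ f1 z)
    (hsum : ∑ z, f0 z = ∑ z, f1 z) :
    ∃ π, IsCoupling f0 f1 π ∧ T.transportCost π ≤ T.tailDistance r f0 f1 := by
  induction hn : T.discrepancyWeight r f0 f1 using Nat.strong_induction_on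
    generalizing f0 f1 with
  | _ n ih =>
  subst hn
  by_cases heq : f0 = f1
  · subst heq
    exact ⟨_, isCoupling_diag h0, (transportCost_diag T f0).trans_le
      (sum_nonneg fun _ _ => abs_nonneg _)⟩
  obtain ⟨x, hx, hdeep⟩ : ∃ x, f0 x ≠ f1 x ∧ ∀ y, T.dist r x < T.dist r y → f0 y = f1 y := by
    classical
    obtain ⟨z, hz⟩ := Function.ne_iff.mp heq
    obtain ⟨x, hx, hmax⟩ := exists_max_image (univ.filter fun z => f0 z ≠ f1 z)
      (T.dist r ·) ⟨z, by simpa using hz⟩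
    exact ⟨x, by simpa using hx,
      fun y hy => by_contra fun h => (hmax y (by simpa using h)).not_gt hy⟩
  have hxr : x ≠ r := by
    rintro rfl
    have := hT.connected.tailSum_sub_tailSum_of_eq_of_dist_lt hdeep
    rw [tailSum_root, tailSum_root, hsum, sub_self] at this
    exact hx (sub_eq_zero.mp this.symm)
  obtain ⟨p, hadj, hp⟩ := (hT.connected r x).exists_adj_dist_add_one hxr.symm
  rcases hx.lt_or_gt with hlt | hgt
  · obtain ⟨π, hπ, hcost⟩ := hT.exists_coupling_of_push_to_parent r h1 h0 hadj hp
      (fun y hy => (hdeep y hy).symm) hlt fun g hg hgs hgw =>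
        ih _ (discrepancyWeight_comm T r f0 f1 ▸ hgw) hg h0 (hgs.trans hsum.symm) rfl
    exact ⟨_, hπ.transpose, by rwa [transportCost_transpose, tailDistance_comm]⟩
  · exact hT.exists_coupling_of_push_to_parent r h0 h1 hadj hp hdeep hgt fun g hg hgs hgw =>
      ih _ hgw hg h1 (hgs.trans hsum) rfl

end SimpleGraph

theorem statement0_general {V E : Type*} [Fintype V] [DecidableEq V]
    (G : DiGraph V E) (r : V) (hG : G.IsRootedTree r)
    (f0 f1 : V → ℝ) (h0 : IsProbDist f0) (h1 : IsProbDist f1) :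
    W1 G.toSimpleGraph f0 f1 =
      ∑ x, |tailSum G.toSimpleGraph r f1 x - tailSum G.toSimpleGraph r f0 x| := by
  have hT := hG.1
  obtain ⟨π, hπ, hcost⟩ :=
    hT.exists_coupling_transportCost_le_tailDistance r h0.1 h1.1 (h0.2.trans h1.2.symm)
  refine IsLeast.csInf_eq ⟨⟨π, hπ, (hT.tailDistance_le_transportCost r hπ).antisymm hcost⟩, ?_⟩
  rintro c ⟨π', hπ', rfl⟩
  exact hT.tailDistance_le_transportCost r hπ'

/-- On a rooted tree, `W1(f0,f1) = Σ_x |F1_x − F0_x|`. -/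
theorem statement0 {V E : Type*} [Fintype V] [Fintype E] [DecidableEq V]
    (G : DiGraph V E) (r : V) (hG : G.IsRootedTree r)
    (f0 f1 : V → ℝ) (h0 : IsProbDist f0) (h1 : IsProbDist f1) :
    W1 G.toSimpleGraph f0 f1 =
      ∑ x, |tailSum G.toSimpleGraph r f1 x - tailSum G.toSimpleGraph r f0 x| :=
  statement0_general G r hG f0 f1 h0 h1
end

section
/- Let G be a rooted tree, let q ≥ 1, and let (f, v, g) be any solution of the discrete transport equation on [0,1]. Then W1(f(0), f(1)) ≤ I_q(v, g). -/
open scoped BigOperators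
open Set

/-!
Integrating the transport equation in time shows that `f 1 - f 0` is the divergence of the net
flux `Φ k = ∫₀¹ v k * g k`. On a rooted tree this flux can be executed as a sequence of
single-edge moves, deepest vertices first, so that every intermediate mass distribution stays
nonnegative; gluing the corresponding couplings gives `W1 (f 0) (f 1) ≤ ∑ k, |Φ k|`. Finally
`∑ k, |Φ k| ≤ ∫ ∑ k, g k * |v k| ≤ ∫ (∑ k, g k * |v k| ^ q) ^ (1 / q) ≤ I_q v g` by the power mean
inequality for the probability weights `g t` and Jensen's inequality for `s ↦ s ^ (1 / q)`.
-/

open Finset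

section Coupling

variable {V : Type*} [Fintype V]

theorem IsCoupling.le_right {μ ν : V → ℝ} {π : V → V → ℝ} (h : IsCoupling μ ν π) (x y : V) :
    π x y ≤ ν y :=
  h.2.2 y ▸ single_le_sum (fun i _ => h.1 i y) (mem_univ x)

theorem IsCoupling.le_left {μ ν : V → ℝ} {π : V → V → ℝ} (h : IsCoupling μ ν π) (x y : V) :
    π x y ≤ μ x :=
  h.2.1 x ▸ single_le_sum (fun i _ => h.1 x i) (mem_univ y)

variable (d : V → V → ℝ)

def TransportableWithin (μ ν : V → ℝ) (c : ℝ) : Prop :=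
  ∃ π : V → V → ℝ, IsCoupling μ ν π ∧ ∑ x, ∑ y, d x y * π x y ≤ c

variable {d}

theorem TransportableWithin.mono {μ ν : V → ℝ} {c c' : ℝ} (h : TransportableWithin d μ ν c)
    (hc : c ≤ c') : TransportableWithin d μ ν c' :=
  let ⟨π, hπ, hcost⟩ := h
  ⟨π, hπ, hcost.trans hc⟩

theorem TransportableWithin.congr_right {μ ν ν' : V → ℝ} {c : ℝ}
    (h : TransportableWithin d μ ν c) (hν : ∀ x, ν x = ν' x) : TransportableWithin d μ ν' c :=
  funext hν ▸ h

theorem transportableWithin_refl (hd0 : ∀ x, d x x = 0) {μ : V → ℝ} (hμ : ∀ x, 0 ≤ μ x) :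
    TransportableWithin d μ μ 0 := by
  classical
  refine ⟨fun x y => if x = y then μ x else 0, ⟨fun x y => ?_, fun x => ?_, fun y => ?_⟩, ?_⟩
  · dsimp only
    split_ifs <;> simp [hμ x]
  · simp
  · simp
  · simp [hd0]

theorem transportableWithin_single [DecidableEq V] (hd0 : ∀ x, d x x = 0) {μ : V → ℝ}
    (hμ : ∀ x, 0 ≤ μ x) {s t : V} {m : ℝ} (hm : 0 ≤ m) (hms : m ≤ μ s) :
    TransportableWithin d μ
      (fun x => μ x + m * ((if t = x then 1 else 0) - (if s = x then 1 else 0))) (m * d s t) := by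
  refine ⟨fun x z => (if x = z then μ x - (if x = s then m else 0) else 0) +
    (if x = s ∧ z = t then m else 0), ⟨fun x z => ?_, fun x => ?_, fun z => ?_⟩, ?_⟩
  · dsimp only
    split_ifs <;> simp_all
  · by_cases hx : x = s <;> simp [sum_add_distrib, hx]
  · by_cases hzt : t = z <;> by_cases hzs : s = z <;> simp [sum_add_distrib, ite_and, hzt, hzs] <;>
      grind
  · simp [mul_add, sum_add_distrib, hd0, ite_and, mul_comm]

/-- Glue the two plans along the middle marginal `lam`: the mass `π₁ x y` travels on from `y`
in the proportions `π₂ y · / lam y`. -/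
theorem TransportableWithin.trans (htri : ∀ x y z, d x z ≤ d x y + d y z) {μ lam ν : V → ℝ}
    {a b : ℝ} (h₁ : TransportableWithin d μ lam a) (h₂ : TransportableWithin d lam ν b) :
    TransportableWithin d μ ν (a + b) := by
  obtain ⟨π₁, hπ₁, hcost₁⟩ := h₁
  obtain ⟨π₂, hπ₂, hcost₂⟩ := h₂
  set e : V → V → V → ℝ := fun x y z => π₁ x y * π₂ y z / lam y
  have he : ∀ x y z, 0 ≤ e x y z := fun x y z =>
    div_nonneg (mul_nonneg (hπ₁.1 x y) (hπ₂.1 y z)) ((hπ₂.1 y y).trans (hπ₂.le_left y y))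
  -- where `lam y = 0` the junk value `_ / 0 = 0` is harmless: both plans vanish through `y`
  have he₁ : ∀ x y, ∑ z, e x y z = π₁ x y := by
    intro x y
    rw [← sum_div, ← mul_sum, hπ₂.2.1 y]
    rcases eq_or_ne (lam y) 0 with hy | hy
    · simp [hy, le_antisymm (hy ▸ hπ₁.le_right x y) (hπ₁.1 x y)]
    · field_simp
  have he₂ : ∀ y z, ∑ x, e x y z = π₂ y z := by
    intro y z
    rw [← sum_div, ← sum_mul, hπ₁.2.2 y]
    rcases eq_or_ne (lam y) 0 with hy | hy
    · simp [hy, le_antisymm (hy ▸ hπ₂.le_left y z) (hπ₂.1 y z)]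
    · field_simp
  refine ⟨fun x z => ∑ y, e x y z, ⟨fun x z => sum_nonneg fun y _ => he x y z, fun x => ?_,
    fun z => ?_⟩, ?_⟩
  · rw [sum_comm, ← hπ₁.2.1 x]
    exact sum_congr rfl fun y _ => he₁ x y
  · rw [sum_comm, ← hπ₂.2.2 z]
    exact sum_congr rfl fun y _ => he₂ y z
  calc ∑ x, ∑ z, d x z * ∑ y, e x y z
      ≤ ∑ x, ∑ y, ∑ z, (d x y + d y z) * e x y z := by
        simp_rw [mul_sum]
        rw [sum_congr rfl fun x _ => sum_comm]
        gcongr with x _ y _ z _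
        exacts [he x y z, htri x y z]
    _ = ∑ x, ∑ y, d x y * π₁ x y + ∑ y, ∑ z, d y z * π₂ y z := by
        simp_rw [add_mul, sum_add_distrib, ← mul_sum, he₁]
        congr 1
        rw [sum_comm]
        refine sum_congr rfl fun y _ => ?_
        rw [sum_comm]
        simp_rw [← mul_sum, he₂]
    _ ≤ a + b := add_le_add hcost₁ hcost₂

theorem W1_le_of_transportableWithin (T : SimpleGraph V) {μ ν : V → ℝ} {c : ℝ}
    (h : TransportableWithin (fun x y => (T.dist x y : ℝ)) μ ν c) : W1 T μ ν ≤ c := by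
  obtain ⟨π, hπ, hcost⟩ := h
  refine le_trans (csInf_le ⟨0, ?_⟩ ⟨π, hπ, rfl⟩) hcost
  rintro _ ⟨π', hπ', rfl⟩
  exact sum_nonneg fun x _ => sum_nonneg fun y _ => mul_nonneg (Nat.cast_nonneg _) (hπ'.1 x y)

end Coupling

namespace SimpleGraph

variable {V : Type*} {G : SimpleGraph V}

/-- Otherwise the geodesics from `r` to `a` and to `b`, each followed by its last edge, would be
two distinct paths from `r` to `y`. -/
theorem IsAcyclic.eq_of_adj_of_dist_eq_add_one (hG : G.IsAcyclic) {r a b y : V}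
    (ha : G.Adj a y) (hb : G.Adj b y) (hra : G.Reachable r a) (hrb : G.Reachable r b)
    (hda : G.dist r y = G.dist r a + 1) (hdb : G.dist r y = G.dist r b + 1) : a = b := by
  have geodesic_concat : ∀ {c} (hc : G.Adj c y), G.Reachable r c →
      G.dist r y = G.dist r c + 1 → ∃ p : G.Walk r c, (p.concat hc).IsPath := by
    intro c hc hrc hd
    classical
    obtain ⟨p, hp, hlen⟩ := hrc.exists_path_of_dist
    refine ⟨p, hp.concat (fun hy => ?_) hc⟩
    have := dist_le (p.takeUntil y hy)
    have := p.length_takeUntil_le_length hy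
    omega
  obtain ⟨p, hp⟩ := geodesic_concat ha hra hda
  obtain ⟨q, hq⟩ := geodesic_concat hb hrb hdb
  exact (Walk.concat_inj (congrArg Subtype.val ((hG.subsingleton_path r y).elim ⟨_, hp⟩ ⟨_, hq⟩))).1

end SimpleGraph

namespace DiGraph

variable {V E : Type*}

theorem adj_tail_head (G : DiGraph V E) (k : E) : G.toSimpleGraph.Adj (G.tail k) (G.head k) :=
  ⟨G.ne k, k, Or.inl ⟨rfl, rfl⟩⟩

theorem IsRootedTree.tail_eq_of_head_eq {G : DiGraph V E} {r : V} (hG : G.IsRootedTree r)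
    {j k : E} (h : G.head j = G.head k) : G.tail j = G.tail k :=
  SimpleGraph.IsAcyclic.eq_of_adj_of_dist_eq_add_one hG.1.isAcyclic (h ▸ G.adj_tail_head j)
    (G.adj_tail_head k) (hG.1.connected r _) (hG.1.connected r _) (h ▸ hG.2 j) (hG.2 k)

section Incidence

variable [DecidableEq V] (G : DiGraph V E)

@[simp]
theorem incidence_head (k : E) : G.incidence (G.head k) k = 1 := by
  simp [incidence]

@[simp]
theorem incidence_tail (k : E) : G.incidence (G.tail k) k = -1 := by
  simp [incidence, (G.ne k).symm]

theorem incidence_eq (x : V) (k : E) :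
    G.incidence x k = (if G.head k = x then 1 else 0) - (if G.tail k = x then 1 else 0) := by
  unfold incidence
  by_cases hh : G.head k = x <;> by_cases ht : G.tail k = x
  · exact absurd (ht.trans hh.symm) (G.ne k)
  all_goals simp [hh, ht]

theorem incidence_congr {j k : E} (hh : G.head j = G.head k) (ht : G.tail j = G.tail k) (x : V) :
    G.incidence x j = G.incidence x k := by
  simp only [incidence, hh, ht]

theorem incidence_eq_zero_of_ne_head_of_depth_le {D : V → ℕ}
    (hD : ∀ k, D (G.head k) = D (G.tail k) + 1) {k : E} {y : V} (hne : G.head k ≠ y)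
    (hk : D (G.head k) ≤ D y) : G.incidence y k = 0 := by
  have htail : G.tail k ≠ y := fun h => by have := hD k; simp only [h] at this; omega
  simp [incidence, hne, htail]

theorem sum_mul_incidence_eq_add_sum_head_ne
    (hpar : ∀ j k, G.head j = G.head k → G.tail j = G.tail k) (Φ : E → ℝ) (S : Finset E)
    (k₀ : E) (x : V) :
    ∑ k ∈ S, Φ k * G.incidence x k =
      (∑ k ∈ S.filter (fun k => G.head k = G.head k₀), Φ k) * G.incidence x k₀ +
        ∑ k ∈ S.filter (fun k => G.head k ≠ G.head k₀), Φ k * G.incidence x k := by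
  rw [← sum_filter_add_sum_filter_not S (fun k => G.head k = G.head k₀), sum_mul]
  congr 1
  refine sum_congr rfl fun k hk => ?_
  have hk : G.head k = G.head k₀ := (mem_filter.1 hk).2
  rw [G.incidence_congr hk (hpar _ _ hk)]

theorem add_mul_incidence_nonneg {ρ : V → ℝ} {m : ℝ} {k : E} (hρ : ∀ x, 0 ≤ ρ x)
    (hhead : 0 ≤ ρ (G.head k) + m) (htail : 0 ≤ ρ (G.tail k) - m) (x : V) :
    0 ≤ ρ x + m * G.incidence x k := by
  unfold incidence
  split_ifs with hh ht
  · exact hh ▸ by linarith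
  · exact ht ▸ by linarith
  · simpa using hρ x

end Incidence

variable [Fintype V] [DecidableEq V] {d : V → V → ℝ}

theorem transportableWithin_edge (G : DiGraph V E) (hd0 : ∀ x, d x x = 0)
    (hsymm : ∀ x y, d x y = d y x) (k : E) {μ : V → ℝ} {m : ℝ} (hμ : ∀ x, 0 ≤ μ x)
    (hμ' : ∀ x, 0 ≤ μ x + m * G.incidence x k) :
    TransportableWithin d μ (fun x => μ x + m * G.incidence x k)
      (|m| * d (G.tail k) (G.head k)) := by
  have hhead := hμ' (G.head k)
  have htail := hμ' (G.tail k)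
  simp only [incidence_head, incidence_tail] at hhead htail
  rcases le_or_gt 0 m with hm | hm
  · rw [abs_of_nonneg hm]
    refine (transportableWithin_single hd0 hμ hm (by linarith)).congr_right fun x => ?_
    rw [incidence_eq]
  · rw [abs_of_neg hm, hsymm]
    refine (transportableWithin_single hd0 hμ (neg_nonneg.2 hm.le) (by linarith)).congr_right
      fun x => ?_
    rw [incidence_eq]
    ring

/-- The edges into a deepest vertex `y` carry the only flow through `y`. Their net flow `c` is
moved first if it leaves `y` (`c ≤ 0`) and last if it enters `y`, so that every intermediate
mass distribution stays nonnegative. -/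
theorem transportableWithin_flow (G : DiGraph V E) (hd0 : ∀ x, d x x = 0)
    (hsymm : ∀ x y, d x y = d y x) (htri : ∀ x y z, d x z ≤ d x y + d y z)
    {D : V → ℕ} (hD : ∀ k, D (G.head k) = D (G.tail k) + 1)
    (hpar : ∀ j k, G.head j = G.head k → G.tail j = G.tail k) (Φ : E → ℝ) (S : Finset E)
    {μ : V → ℝ} (hμ : ∀ x, 0 ≤ μ x) (hν : ∀ x, 0 ≤ μ x + ∑ k ∈ S, Φ k * G.incidence x k) :
    TransportableWithin d μ (fun x => μ x + ∑ k ∈ S, Φ k * G.incidence x k)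
      (∑ k ∈ S, |Φ k| * d (G.tail k) (G.head k)) := by
  induction S using Finset.strongInduction generalizing μ with
  | H S ih =>
  rcases S.eq_empty_or_nonempty with rfl | hS
  · simpa using transportableWithin_refl hd0 hμ
  obtain ⟨k₀, hk₀, hmax⟩ := S.exists_max_image (fun k => D (G.head k)) hS
  set y := G.head k₀
  set R := S.filter (fun k => G.head k ≠ y)
  set c := ∑ k ∈ S.filter (fun k => G.head k = y), Φ k
  have hsplit : ∀ x, ∑ k ∈ S, Φ k * G.incidence x k =
      c * G.incidence x k₀ + ∑ k ∈ R, Φ k * G.incidence x k :=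
    G.sum_mul_incidence_eq_add_sum_head_ne hpar Φ S k₀
  have hν_y : μ y + ∑ k ∈ S, Φ k * G.incidence y k = μ y + c := by
    rw [hsplit y, sum_eq_zero fun k hk => by
      rw [G.incidence_eq_zero_of_ne_head_of_depth_le hD (mem_filter.1 hk).2
        (hmax k (mem_filter.1 hk).1), mul_zero], incidence_head]
    ring
  have hcost : |c| * d (G.tail k₀) y + ∑ k ∈ R, |Φ k| * d (G.tail k) (G.head k) ≤
      ∑ k ∈ S, |Φ k| * d (G.tail k) (G.head k) := by
    rw [← sum_filter_add_sum_filter_not S (fun k => G.head k = y)]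
    gcongr
    rw [sum_congr rfl fun k hk => by
      rw [(mem_filter.1 hk).2, hpar _ _ (mem_filter.1 hk).2], ← sum_mul]
    refine mul_le_mul_of_nonneg_right (abs_sum_le_sum_abs _ _) ?_
    linarith [htri (G.tail k₀) y (G.tail k₀), hd0 (G.tail k₀), hsymm y (G.tail k₀)]
  have hRS : R ⊂ S := filter_ssubset.2 ⟨k₀, hk₀, by simp [y]⟩
  rcases le_or_gt c 0 with hc | hc
  · have hμ' : ∀ x, 0 ≤ μ x + c * G.incidence x k₀ :=
      G.add_mul_incidence_nonneg hμ (by linarith [hν y]) (by linarith [hμ (G.tail k₀)])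
    refine (((G.transportableWithin_edge hd0 hsymm k₀ hμ hμ').trans htri
      (ih R hRS hμ' fun x => ?_)).congr_right fun x => ?_).mono hcost
    · linarith [hν x, hsplit x]
    · linarith [hsplit x]
  · have hν' : ∀ x, 0 ≤ μ x + ∑ k ∈ R, Φ k * G.incidence x k := fun x => by
      have := G.add_mul_incidence_nonneg (k := k₀) (m := -c) hν (by linarith [hμ y])
        (by linarith [hν (G.tail k₀)]) x
      linarith [hsplit x]
    refine (((ih R hRS hμ hν').trans htri (G.transportableWithin_edge hd0 hsymm k₀ hν'
      fun x => ?_)).congr_right fun x => ?_).mono (by linarith)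
    · linarith [hν x, hsplit x]
    · linarith [hsplit x]

end DiGraph

section Analysis

open MeasureTheory intervalIntegral

theorem integral_rpow_le_rpow_integral {h : ℝ → ℝ} {p : ℝ} (hp₀ : 0 < p) (hp₁ : p ≤ 1)
    (hh : ContinuousOn h (Icc 0 1)) (hh₀ : ∀ t ∈ Icc (0 : ℝ) 1, 0 ≤ h t) :
    ∫ t in (0 : ℝ)..1, h t ^ p ≤ (∫ t in (0 : ℝ)..1, h t) ^ p := by
  have : IsProbabilityMeasure (volume.restrict (Ioc (0 : ℝ) 1)) := ⟨by simp⟩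
  have hpow : ContinuousOn (· ^ p) (Ici (0 : ℝ)) :=
    continuousOn_id.rpow_const fun _ _ => Or.inr hp₀.le
  rw [integral_of_le zero_le_one, integral_of_le zero_le_one]
  exact (Real.concaveOn_rpow hp₀.le hp₁).le_map_integral hpow isClosed_Ici
    ((ae_restrict_iff' measurableSet_Ioc).2 (.of_forall fun t ht => hh₀ t (Ioc_subset_Icc_self ht)))
    (hh.integrableOn_Icc.mono_set Ioc_subset_Icc_self)
    ((hpow.comp hh hh₀).integrableOn_Icc.mono_set Ioc_subset_Icc_self)

theorem sum_abs_integral_mul_le_Iq {E : Type*} [Fintype E] {q : ℝ} (hq : 1 ≤ q)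
    {v g : ℝ → E → ℝ} (hv : ContinuousOn v (Icc 0 1)) (hg : ContinuousOn g (Icc 0 1))
    (hprob : ∀ t ∈ Icc (0 : ℝ) 1, IsProbDist (g t)) :
    ∑ k, |∫ t in (0 : ℝ)..1, v t k * g t k| ≤ Iq q v g := by
  have hq₀ : 0 < q := zero_lt_one.trans_le hq
  have hvk k : ContinuousOn (fun t => v t k) (Icc 0 1) := (continuous_apply k).comp_continuousOn hv
  have hgk k : ContinuousOn (fun t => g t k) (Icc 0 1) := (continuous_apply k).comp_continuousOn hg
  have hmean : ContinuousOn (fun t => ∑ k, g t k * |v t k| ^ q) (Icc 0 1) :=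
    continuousOn_finsetSum _ fun k _ =>
      (hgk k).mul (((hvk k).abs).rpow_const fun _ _ => Or.inr hq₀.le)
  have hmean₀ : ∀ t ∈ Icc (0 : ℝ) 1, 0 ≤ ∑ k, g t k * |v t k| ^ q := fun t ht =>
    sum_nonneg fun k _ => mul_nonneg ((hprob t ht).1 k) (by positivity)
  calc ∑ k, |∫ t in (0 : ℝ)..1, v t k * g t k|
      ≤ ∑ k, ∫ t in (0 : ℝ)..1, g t k * |v t k| := by
        refine sum_le_sum fun k _ => (abs_integral_le_integral_abs zero_le_one).trans_eq ?_
        refine integral_congr fun t ht => ?_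
        rw [Set.uIcc_of_le zero_le_one] at ht
        simp [abs_mul, abs_of_nonneg ((hprob t ht).1 k), mul_comm]
    _ = ∫ t in (0 : ℝ)..1, ∑ k, g t k * |v t k| :=
        (integral_finsetSum fun k _ =>
          ((hgk k).mul (hvk k).abs).intervalIntegrable_of_Icc zero_le_one).symm
    _ ≤ ∫ t in (0 : ℝ)..1, (∑ k, g t k * |v t k| ^ q) ^ (1 / q) := by
        refine integral_mono_on zero_le_one ?_ ?_ fun t ht => Real.arith_mean_le_rpow_mean _ _ _
          (fun k _ => (hprob t ht).1 k) (hprob t ht).2 (fun k _ => abs_nonneg _) hq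
        · exact (continuousOn_finsetSum _ fun k _ =>
            (hgk k).mul (hvk k).abs).intervalIntegrable_of_Icc zero_le_one
        · exact (hmean.rpow_const fun _ _ => Or.inr (by positivity)).intervalIntegrable_of_Icc
            zero_le_one
    _ ≤ Iq q v g :=
        integral_rpow_le_rpow_integral (by positivity) ((div_le_one hq₀).2 hq) hmean hmean₀

end Analysis

namespace TransportSolution

variable {V E : Type*} [Fintype V] [Fintype E] [DecidableEq V] {G : DiGraph V E}
  (sol : TransportSolution G)

noncomputable def flux (k : E) : ℝ := ∫ t in (0 : ℝ)..1, sol.v t k * sol.g t k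

open intervalIntegral in
theorem f_one_eq (x : V) : sol.f 1 x = sol.f 0 x + ∑ k, sol.flux k * G.incidence x k := by
  have hterm k : ContinuousOn (fun t => G.incidence x k * sol.v t k * sol.g t k) (Icc 0 1) :=
    (continuousOn_const.mul ((continuous_apply k).comp_continuousOn sol.v_cont)).mul
      ((continuous_apply k).comp_continuousOn sol.g_cont)
  have hftc := integral_eq_sub_of_hasDerivAt_of_le zero_le_one
    (fun t ht => (sol.transport x t ht).continuousWithinAt)
    (fun t ht => (sol.transport x t (Ioo_subset_Icc_self ht)).hasDerivAt (Icc_mem_nhds ht.1 ht.2))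
    ((continuousOn_finsetSum _ fun k _ => hterm k).intervalIntegrable_of_Icc zero_le_one)
  rw [integral_finsetSum fun k _ => (hterm k).intervalIntegrable_of_Icc zero_le_one] at hftc
  simp only [mul_assoc, integral_const_mul] at hftc
  simp only [flux, mul_comm (∫ _ in (0 : ℝ)..1, _)]
  linarith

end TransportSolution

/-- on a rooted tree, `W1(f(0),f(1)) ≤ I_q(v,g)` for any solution. -/
theorem statement5 {V E : Type*} [Fintype V] [Fintype E] [DecidableEq V]
    (G : DiGraph V E) (r : V) (hG : G.IsRootedTree r)
    (q : ℝ) (hq : 1 ≤ q) (sol : TransportSolution G) :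
    W1 G.toSimpleGraph (sol.f 0) (sol.f 1) ≤ Iq q sol.v sol.g := by
  have hconn := hG.1.connected
  have hplan := G.transportableWithin_flow (d := fun x y => (G.toSimpleGraph.dist x y : ℝ))
    (by simp) (fun x y => by rw [SimpleGraph.dist_comm])
    (fun x y z => by exact_mod_cast hconn.dist_triangle) hG.2 (fun _ _ => hG.tail_eq_of_head_eq)
    sol.flux univ (sol.f_prob 0 (by simp)).1 fun x => sol.f_one_eq x ▸ (sol.f_prob 1 (by simp)).1 x
  calc W1 G.toSimpleGraph (sol.f 0) (sol.f 1)
      ≤ ∑ k, |sol.flux k| * G.toSimpleGraph.dist (G.tail k) (G.head k) :=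
        W1_le_of_transportableWithin _ (hplan.congr_right fun x => (sol.f_one_eq x).symm)
    _ = ∑ k, |sol.flux k| := by simp [SimpleGraph.dist_eq_one_iff_adj.2 (G.adj_tail_head _)]
    _ ≤ Iq q sol.v sol.g := sum_abs_integral_mul_le_Iq hq sol.v_cont sol.g_cont sol.g_prob
end

section
/- Let G be a finite directed graph whose underlying undirected graph is connected, and let q ≥ 1. Then V_q is a metric on the set of probability distributions on V: V_q(f0,f1) ≥ 0 with equality iff f0 = f1; V_q(f0,f1) = V_q(f1,f0); and V_q(f0,f2) ≤ V_q(f0,f1) + V_q(f1,f2) for all probability distributions f0, f1, f2 on V. -/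
/-!
Symmetry comes from running solutions backwards in time. Each vertex mass changes at rate at most
`∑ₖ gₖ |vₖ|`, so Jensen's inequality (over edges, then over time) gives `|f₁ x - f₀ x| ≤ I_q`;
since on a connected graph admissible paths exist (a flow with prescribed divergence, carried by
uniform edge weights), `V_q` separates points. Without edges no path is admissible, so `V_q` is
`sInf ∅ = 0`, and connectivity leaves a single vertex.

For the triangle inequality, concatenate two nearly optimal paths. A time change whose speed
vanishes at both ends makes the velocities zero at the junctions, and in a resting phase between
the two runs the edge weights are interpolated linearly at zero cost. Running a path in time `a`
multiplies its `q`-th power cost by at most `(M / a) ^ (q - 1)`, `M` the maximal speed; taking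
the two running times proportional to the two costs, then letting the resting phase shrink and
`M → 1`, gives the bound `V_q(f₀, f₁) + V_q(f₁, f₂)`.
-/

open scoped BigOperators
open Set

/-- `V_q`: infimum of `I_q` over transport solutions with given endpoints. -/
noncomputable def Vq {V E : Type*} [Fintype V] [Fintype E] [DecidableEq V]
    (G : DiGraph V E) (q : ℝ) (f0 f1 : V → ℝ) : ℝ :=
  sInf {c : ℝ | ∃ sol : TransportSolution G,
    sol.f 0 = f0 ∧ sol.f 1 = f1 ∧ c = Iq q sol.v sol.g}


open MeasureTheory intervalIntegral Filter Topology

section ProbDist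

variable {S : Type*} [Fintype S]

lemma IsProbDist.convexComb {p r : S → ℝ} (hp : IsProbDist p) (hr : IsProbDist r) {s : ℝ}
    (hs : s ∈ Icc (0:ℝ) 1) : IsProbDist ((1 - s) • p + s • r) := by
  refine ⟨fun i => ?_, ?_⟩
  · simp only [Pi.add_apply, Pi.smul_apply, smul_eq_mul]
    exact add_nonneg (mul_nonneg (by linarith [hs.2]) (hp.1 i)) (mul_nonneg hs.1 (hr.1 i))
  · simp only [Pi.add_apply, Pi.smul_apply, smul_eq_mul, Finset.sum_add_distrib,
      ← Finset.mul_sum, hp.2, hr.2]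
    ring

lemma isProbDist_uniform [Nonempty S] : IsProbDist fun _ : S => (Fintype.card S : ℝ)⁻¹ :=
  ⟨fun _ => by positivity, by simp [Finset.card_univ]⟩

lemma IsProbDist.nonempty {p : S → ℝ} (hp : IsProbDist p) : Nonempty S := by
  by_contra h
  have := hp.2
  simp_all

lemma IsProbDist.eq_of_subsingleton [Subsingleton S] {p r : S → ℝ} (hp : IsProbDist p)
    (hr : IsProbDist r) : p = r := by
  funext x
  have huniv : (Finset.univ : Finset S) = {x} := Finset.eq_singleton_iff_unique_mem.2
    ⟨Finset.mem_univ x, fun y _ => Subsingleton.elim y x⟩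
  have hp2 := hp.2
  have hr2 := hr.2
  rw [huniv, Finset.sum_singleton] at hp2 hr2
  rw [hp2, hr2]

end ProbDist

namespace DiGraph

variable {V E : Type*} [Fintype E] [DecidableEq V] (G : DiGraph V E)

lemma incidence_mulVec_single [DecidableEq E] (k : E) :
    (Matrix.of G.incidence).mulVec (Pi.single k 1)
      = Pi.single (G.head k) 1 - Pi.single (G.tail k) 1 := by
  ext x
  simp only [Matrix.mulVec_single_one, Matrix.col_apply, Matrix.of_apply, incidence, Pi.sub_apply,
    Pi.single_apply]
  rcases eq_or_ne (G.head k) x with rfl | hh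
  · simp [(G.ne k).symm]
  · rcases eq_or_ne (G.tail k) x with rfl | ht
    · simp [hh, Ne.symm hh]
    · simp [hh, ht, Ne.symm hh, Ne.symm ht]

lemma single_sub_single_mem_range_of_reachable {x y : V} (h : G.toSimpleGraph.Reachable x y) :
    Pi.single y 1 - Pi.single x 1 ∈ LinearMap.range (Matrix.of G.incidence).mulVecLin := by
  classical
  obtain ⟨p⟩ := h
  induction p with
  | nil => simp
  | @cons x x' y hadj _ ih =>
    rw [← sub_add_sub_cancel _ (Pi.single x' 1)]
    refine add_mem ih ?_
    obtain ⟨-, k, ⟨rfl, rfl⟩ | ⟨rfl, rfl⟩⟩ := hadj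
    · exact ⟨Pi.single k 1, G.incidence_mulVec_single k⟩
    · exact ⟨-Pi.single k 1, by simp [Matrix.mulVec_neg, G.incidence_mulVec_single k]⟩

lemma exists_flow [Fintype V] (hconn : G.toSimpleGraph.Connected) (δ : V → ℝ) (hδ : ∑ x, δ x = 0) :
    ∃ u : E → ℝ, ∀ x, ∑ k, G.incidence x k * u k = δ x := by
  obtain ⟨x₀⟩ := hconn.nonempty
  have hδ_eq : δ = ∑ y, δ y • (Pi.single y 1 - Pi.single x₀ 1 : V → ℝ) := by
    ext x
    simp only [Finset.sum_apply, Pi.smul_apply, Pi.sub_apply, Pi.single_apply, smul_eq_mul,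
      mul_sub, mul_ite, mul_one, mul_zero, Finset.sum_sub_distrib, Finset.sum_ite_eq,
      Finset.mem_univ, if_true, Finset.sum_ite_irrel, Finset.sum_const_zero, hδ]
    split_ifs <;> ring
  have hmem : δ ∈ LinearMap.range (Matrix.of G.incidence).mulVecLin := by
    rw [hδ_eq]
    exact Submodule.sum_mem _ fun y _ =>
      Submodule.smul_mem _ _ (G.single_sub_single_mem_range_of_reachable (hconn.preconnected x₀ y))
  obtain ⟨u, hu⟩ := hmem
  exact ⟨u, fun x => congrFun hu x⟩

end DiGraph

section CostDensity

variable {E : Type*} [Fintype E]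

noncomputable def costDensity (q : ℝ) (v g : ℝ → E → ℝ) (t : ℝ) : ℝ :=
  ∑ k, g t k * |v t k| ^ q

lemma costDensity_nonneg {q : ℝ} {v g : ℝ → E → ℝ} {t : ℝ} (hg : ∀ k, 0 ≤ g t k) :
    0 ≤ costDensity q v g t :=
  Finset.sum_nonneg fun k _ => mul_nonneg (hg k) (Real.rpow_nonneg (abs_nonneg _) _)

lemma ContinuousOn.costDensity {q : ℝ} (hq : 0 ≤ q) {v g : ℝ → E → ℝ} {s : Set ℝ}
    (hv : ContinuousOn v s) (hg : ContinuousOn g s) : ContinuousOn (costDensity q v g) s :=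
  continuousOn_finsetSum _ fun k _ => ((continuous_apply k).comp_continuousOn hg).mul
    ((Real.continuous_rpow_const hq).comp_continuousOn
      ((continuous_apply k).comp_continuousOn hv).abs)

lemma costDensity_smul_comp {q : ℝ} (v g : ℝ → E → ℝ) {c τ : ℝ → ℝ} {t : ℝ} (hc : 0 ≤ c t) :
    costDensity q (fun t => c t • v (τ t)) (fun t => g (τ t)) t
      = c t ^ q * costDensity q v g (τ t) := by
  simp only [costDensity, Finset.mul_sum, Pi.smul_apply, smul_eq_mul, abs_mul, abs_of_nonneg hc,
    Real.mul_rpow hc (abs_nonneg _)]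
  exact Finset.sum_congr rfl fun k _ => by ring

lemma costDensity_one_rpow_le {q : ℝ} (hq : 1 ≤ q) {v g : ℝ → E → ℝ} {t : ℝ}
    (hg : IsProbDist (g t)) : costDensity 1 v g t ^ q ≤ costDensity q v g t := by
  simp only [costDensity, Real.rpow_one]
  exact Real.rpow_arith_mean_le_arith_mean_rpow _ _ _ (fun k _ => hg.1 k) hg.2
    (fun k _ => abs_nonneg _) hq

lemma Iq_nonneg {q : ℝ} {v g : ℝ → E → ℝ} (hg : ∀ t ∈ Icc (0:ℝ) 1, ∀ k, 0 ≤ g t k) :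
    0 ≤ Iq q v g :=
  Real.rpow_nonneg (integral_nonneg zero_le_one fun t ht => costDensity_nonneg (hg t ht)) _

lemma Iq_rpow {q : ℝ} (hq : q ≠ 0) {v g : ℝ → E → ℝ} (hg : ∀ t ∈ Icc (0:ℝ) 1, ∀ k, 0 ≤ g t k) :
    Iq q v g ^ q = ∫ t in (0:ℝ)..1, costDensity q v g t := by
  rw [Iq, one_div]
  exact Real.rpow_inv_rpow (integral_nonneg zero_le_one fun t ht => costDensity_nonneg (hg t ht)) hq

end CostDensity

lemma HasDerivWithinAt.union_of_isClosed {f : ℝ → ℝ} {f' : ℝ → ℝ} {s t : Set ℝ}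
    (hs : IsClosed s) (ht : IsClosed t) (hfs : ∀ x ∈ s, HasDerivWithinAt f (f' x) s x)
    (hft : ∀ x ∈ t, HasDerivWithinAt f (f' x) t x) {x : ℝ} :
    HasDerivWithinAt f (f' x) (s ∪ t) x := by
  classical
  refine .union ?_ ?_
  · exact if hx : x ∈ s then hfs x hx
      else HasFDerivWithinAt.of_notMem_closure (by rwa [hs.closure_eq])
  · exact if hx : x ∈ t then hft x hx
      else HasFDerivWithinAt.of_notMem_closure (by rwa [ht.closure_eq])

noncomputable def splice {X : Type*} (β : ℝ) (u w : ℝ → X) (t : ℝ) : X := if t ≤ β then u t else w t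

section Splice

variable {X : Type*} {α β γ : ℝ} {u w : ℝ → X}

lemma splice_eqOn_left : EqOn (splice β u w) u (Iic β) := fun _ ht => if_pos ht

lemma splice_eqOn_right (h : u β = w β) : EqOn (splice β u w) w (Ici β) := by
  intro t ht
  rcases eq_or_lt_of_le (show β ≤ t from ht) with rfl | hlt
  · exact (if_pos le_rfl).trans h
  · exact if_neg (not_le.2 hlt)

lemma splice_eqOn_Icc_left : EqOn (splice β u w) u (Icc α β) :=
  splice_eqOn_left.mono Icc_subset_Iic_self

lemma splice_eqOn_Icc_right (h : u β = w β) : EqOn (splice β u w) w (Icc β γ) :=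
  (splice_eqOn_right h).mono Icc_subset_Ici_self

lemma splice_of_lt {t : ℝ} (ht : β < t) : splice β u w t = w t := if_neg (not_le.2 ht)

lemma ContinuousOn.splice [TopologicalSpace X] (hu : ContinuousOn u (Icc α β))
    (hw : ContinuousOn w (Icc β γ)) (h : u β = w β) (hαβ : α ≤ β) (hβγ : β ≤ γ) :
    ContinuousOn (splice β u w) (Icc α γ) := by
  rw [← Icc_union_Icc_eq_Icc hαβ hβγ]
  exact (hu.congr splice_eqOn_Icc_left).union_of_isClosed (hw.congr (splice_eqOn_Icc_right h))
    isClosed_Icc isClosed_Icc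

lemma integral_splice {u w : ℝ → ℝ} (hu : IntervalIntegrable u volume α β)
    (hw : IntervalIntegrable w volume β γ) (hαβ : α ≤ β) (hβγ : β ≤ γ) :
    ∫ t in α..γ, splice β u w t = (∫ t in α..β, u t) + ∫ t in β..γ, w t := by
  have hl : EqOn u (splice β u w) (uIoo α β) := fun t ht =>
    (splice_eqOn_left (show t ≤ β from ((uIoo_of_le hαβ) ▸ ht).2.le)).symm
  have hr : EqOn w (splice β u w) (uIoo β γ) := fun t ht =>
    (splice_of_lt ((uIoo_of_le hβγ) ▸ ht).1).symm
  rw [← integral_add_adjacent_intervals (hu.congr_uIoo hl) (hw.congr_uIoo hr),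
    integral_congr_uIoo hl, integral_congr_uIoo hr]

lemma costDensity_splice {E : Type*} [Fintype E] (q : ℝ) (v₁ v₂ g₁ g₂ : ℝ → E → ℝ) :
    costDensity q (splice β v₁ v₂) (splice β g₁ g₂)
      = splice β (costDensity q v₁ g₁) (costDensity q v₂ g₂) := by
  ext t
  by_cases h : t ≤ β <;> simp [splice, costDensity, h]

end Splice

structure IsTransportOn {V E : Type*} [Fintype V] [Fintype E] [DecidableEq V] (G : DiGraph V E)
    (s : Set ℝ) (f : ℝ → V → ℝ) (v g : ℝ → E → ℝ) : Prop where
  f_prob : ∀ t ∈ s, IsProbDist (f t)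
  g_prob : ∀ t ∈ s, IsProbDist (g t)
  v_cont : ContinuousOn v s
  g_cont : ContinuousOn g s
  transport : ∀ x : V, ∀ t ∈ s,
    HasDerivWithinAt (fun r => f r x) (∑ k, G.incidence x k * v t k * g t k) s t

namespace IsTransportOn

variable {V E : Type*} [Fintype V] [Fintype E] [DecidableEq V] {G : DiGraph V E}
  {f f₁ f₂ : ℝ → V → ℝ} {v g v₁ v₂ g₁ g₂ : ℝ → E → ℝ}

lemma comp {s s' : Set ℝ} {τ c : ℝ → ℝ} (h : IsTransportOn G s f v g)
    (hτ : ∀ t ∈ s', HasDerivWithinAt τ (c t) s' t) (hc : ContinuousOn c s')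
    (hmaps : MapsTo τ s' s) :
    IsTransportOn G s' (fun t => f (τ t)) (fun t => c t • v (τ t)) (fun t => g (τ t)) := by
  have hτc : ContinuousOn τ s' := fun t ht => (hτ t ht).continuousWithinAt
  refine ⟨fun t ht => h.f_prob _ (hmaps ht), fun t ht => h.g_prob _ (hmaps ht),
    hc.smul (h.v_cont.comp hτc hmaps), h.g_cont.comp hτc hmaps, fun x t ht => ?_⟩
  refine ((h.transport x (τ t) (hmaps ht)).comp t (hτ t ht) hmaps).congr_deriv ?_
  simp only [Finset.sum_mul, Pi.smul_apply, smul_eq_mul]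
  exact Finset.sum_congr rfl fun k _ => by ring

lemma splice {α β γ : ℝ} (h₁ : IsTransportOn G (Icc α β) f₁ v₁ g₁)
    (h₂ : IsTransportOn G (Icc β γ) f₂ v₂ g₂) (hf : f₁ β = f₂ β) (hv : v₁ β = v₂ β)
    (hg : g₁ β = g₂ β) (hαβ : α ≤ β) (hβγ : β ≤ γ) :
    IsTransportOn G (Icc α γ) (splice β f₁ f₂) (splice β v₁ v₂) (splice β g₁ g₂) := by
  refine ⟨?_, ?_, h₁.v_cont.splice h₂.v_cont hv hαβ hβγ,
    h₁.g_cont.splice h₂.g_cont hg hαβ hβγ, fun x t ht => ?_⟩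
  all_goals rw [← Icc_union_Icc_eq_Icc hαβ hβγ] at *
  · rintro t (ht | ht)
    · rw [splice_eqOn_Icc_left ht]; exact h₁.f_prob t ht
    · rw [splice_eqOn_Icc_right hf ht]; exact h₂.f_prob t ht
  · rintro t (ht | ht)
    · rw [splice_eqOn_Icc_left ht]; exact h₁.g_prob t ht
    · rw [splice_eqOn_Icc_right hg ht]; exact h₂.g_prob t ht
  · refine HasDerivWithinAt.union_of_isClosed
      (f' := fun t => ∑ k, G.incidence x k * _root_.splice β v₁ v₂ t k * _root_.splice β g₁ g₂ t k)
      isClosed_Icc isClosed_Icc (fun t ht => ?_) (fun t ht => ?_)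
    · simp only [splice_eqOn_Icc_left ht]
      exact (h₁.transport x t ht).congr (fun r hr => by rw [splice_eqOn_Icc_left hr])
        (by rw [splice_eqOn_Icc_left ht])
    · simp only [splice_eqOn_Icc_right hv ht, splice_eqOn_Icc_right hg ht]
      exact (h₂.transport x t ht).congr (fun r hr => by rw [splice_eqOn_Icc_right hf hr])
        (by rw [splice_eqOn_Icc_right hf ht])

lemma integral_costDensity_splice {q α β γ : ℝ} (hq : 0 ≤ q)
    (h₁ : IsTransportOn G (Icc α β) f₁ v₁ g₁) (h₂ : IsTransportOn G (Icc β γ) f₂ v₂ g₂)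
    (hαβ : α ≤ β) (hβγ : β ≤ γ) :
    ∫ t in α..γ, costDensity q (_root_.splice β v₁ v₂) (_root_.splice β g₁ g₂) t
      = (∫ t in α..β, costDensity q v₁ g₁ t) + ∫ t in β..γ, costDensity q v₂ g₂ t := by
  rw [costDensity_splice]
  exact integral_splice ((h₁.v_cont.costDensity hq h₁.g_cont).intervalIntegrable_of_Icc hαβ)
    ((h₂.v_cont.costDensity hq h₂.g_cont).intervalIntegrable_of_Icc hβγ) hαβ hβγ

end IsTransportOn

lemma rpow_le_rpow_sub_one_mul {c M q : ℝ} (hq : 1 ≤ q) (hc : 0 ≤ c) (hcM : c ≤ M) :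
    c ^ q ≤ M ^ (q - 1) * c := calc
  c ^ q = c ^ (q - 1) * c := by rw [← Real.rpow_add_one' hc (by linarith), sub_add_cancel]
  _ ≤ M ^ (q - 1) * c := mul_le_mul_of_nonneg_right (Real.rpow_le_rpow hc hcM (by linarith)) hc

structure IsTimeChange (α β : ℝ) (τ c : ℝ → ℝ) (M : ℝ) : Prop where
  le : α ≤ β
  hasDerivAt : ∀ t ∈ Icc α β, HasDerivAt τ (c t) t
  continuousOn_deriv : ContinuousOn c (Icc α β)
  map_left : τ α = 0
  map_right : τ β = 1
  nonneg : ∀ t ∈ Icc α β, 0 ≤ c t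
  le_bound : ∀ t ∈ Icc α β, c t ≤ M

namespace IsTimeChange

variable {α β M : ℝ} {τ c : ℝ → ℝ}

lemma continuousOn (h : IsTimeChange α β τ c M) : ContinuousOn τ (Icc α β) :=
  fun t ht => (h.hasDerivAt t ht).continuousAt.continuousWithinAt

lemma mapsTo (h : IsTimeChange α β τ c M) : MapsTo τ (Icc α β) (Icc 0 1) := by
  have hmono : MonotoneOn τ (Icc α β) :=
    monotoneOn_of_hasDerivWithinAt_nonneg (convex_Icc α β) h.continuousOn
      (fun t ht => (h.hasDerivAt t (interior_subset ht)).hasDerivWithinAt)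
      (fun t ht => h.nonneg t (interior_subset ht))
  intro t ht
  rw [← h.map_left, ← h.map_right]
  exact ⟨hmono (left_mem_Icc.2 h.le) ht ht.1, hmono ht (right_mem_Icc.2 h.le) ht.2⟩

lemma affine (h : IsTimeChange 0 1 τ c M) (hαβ : α < β) :
    IsTimeChange α β (fun t => τ ((t - α) / (β - α)))
      (fun t => c ((t - α) / (β - α)) / (β - α)) (M / (β - α)) := by
  have hpos : 0 < β - α := sub_pos.2 hαβ
  have hmem : MapsTo (fun t => (t - α) / (β - α)) (Icc α β) (Icc 0 1) := fun t ht =>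
    ⟨div_nonneg (by linarith [ht.1]) hpos.le, (div_le_one hpos).2 (by linarith [ht.2])⟩
  refine ⟨hαβ.le, fun t ht => ?_, ?_, by simp [h.map_left], by simp [hpos.ne', h.map_right],
    fun t ht => div_nonneg (h.nonneg _ (hmem ht)) hpos.le,
    fun t ht => div_le_div_of_nonneg_right (h.le_bound _ (hmem ht)) hpos.le⟩
  · have := (h.hasDerivAt _ (hmem ht)).comp t (((hasDerivAt_id t).sub_const α).div_const (β - α))
    rw [one_div, ← div_eq_mul_inv] at this
    exact this
  · exact (h.continuousOn_deriv.comp (by fun_prop) hmem).div_const _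

end IsTimeChange

lemma isTimeChange_id : IsTimeChange 0 1 (fun s => s) (fun _ => 1) 1 :=
  ⟨zero_le_one, fun t _ => hasDerivAt_id t, continuousOn_const, rfl, rfl,
    fun _ _ => zero_le_one, fun _ _ => le_rfl⟩

namespace IsTransportOn

variable {V E : Type*} [Fintype V] [Fintype E] [DecidableEq V] {G : DiGraph V E}
  {f : ℝ → V → ℝ} {v g : ℝ → E → ℝ} {α β M : ℝ} {τ c : ℝ → ℝ}

lemma timeChange (h : IsTransportOn G (Icc 0 1) f v g) (hτ : IsTimeChange α β τ c M) :
    IsTransportOn G (Icc α β) (fun t => f (τ t)) (fun t => c t • v (τ t)) (fun t => g (τ t)) :=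
  h.comp (fun t ht => (hτ.hasDerivAt t ht).hasDerivWithinAt) hτ.continuousOn_deriv hτ.mapsTo

/-- Rescaling time by a speed `c ≤ M` multiplies the cost density by `c ^ q ≤ M ^ (q - 1) c`,
and `∫ c (D ∘ τ) = ∫ D` by change of variables. -/
lemma integral_costDensity_timeChange_le {q : ℝ} (hq : 1 ≤ q) (h : IsTransportOn G (Icc 0 1) f v g)
    (hτ : IsTimeChange α β τ c M) :
    ∫ t in α..β, costDensity q (fun t => c t • v (τ t)) (fun t => g (τ t)) t
      ≤ M ^ (q - 1) * ∫ t in (0:ℝ)..1, costDensity q v g t := by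
  have hq0 : 0 ≤ q := by linarith
  have hD : ContinuousOn (costDensity q v g) (Icc 0 1) := h.v_cont.costDensity hq0 h.g_cont
  have hpiece := h.timeChange hτ
  calc ∫ t in α..β, costDensity q (fun t => c t • v (τ t)) (fun t => g (τ t)) t
      ≤ ∫ t in α..β, M ^ (q - 1) * ((costDensity q v g ∘ τ) t * c t) := by
        refine integral_mono_on hτ.le
          ((hpiece.v_cont.costDensity hq0 hpiece.g_cont).intervalIntegrable_of_Icc hτ.le)
          ((((hD.comp hτ.continuousOn hτ.mapsTo).mul hτ.continuousOn_deriv).const_smul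
            (M ^ (q - 1))).intervalIntegrable_of_Icc hτ.le) fun t ht => ?_
        rw [costDensity_smul_comp v g (hτ.nonneg t ht), Function.comp_apply, mul_comm _ (c t),
          ← mul_assoc]
        exact mul_le_mul_of_nonneg_right
          (rpow_le_rpow_sub_one_mul hq (hτ.nonneg t ht) (hτ.le_bound t ht))
          (costDensity_nonneg (h.g_prob _ (hτ.mapsTo ht)).1)
    _ = M ^ (q - 1) * ∫ t in (0:ℝ)..1, costDensity q v g t := by
        rw [intervalIntegral.integral_const_mul, integral_comp_mul_deriv'
          (by rw [uIcc_of_le hτ.le]; exact hτ.hasDerivAt)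
          (by rw [uIcc_of_le hτ.le]; exact hτ.continuousOn_deriv) (hD.mono ?_), hτ.map_left,
          hτ.map_right]
        rw [uIcc_of_le hτ.le]
        exact hτ.mapsTo.image_subset

end IsTransportOn

lemma subsingleton_of_connected_of_isEmpty {V E : Type*} [IsEmpty E] {G : DiGraph V E}
    (hconn : G.toSimpleGraph.Connected) :
    Subsingleton V := by
  refine ⟨fun x y => ?_⟩
  obtain ⟨p⟩ := hconn.preconnected x y
  cases p with
  | nil => rfl
  | cons h _ => exact isEmptyElim h.2.choose

section Solutions

variable {V E : Type*} [Fintype V] [Fintype E] [DecidableEq V] {G : DiGraph V E}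
  {f : ℝ → V → ℝ} {v g : ℝ → E → ℝ}

lemma TransportSolution.isTransportOn (sol : TransportSolution G) :
    IsTransportOn G (Icc 0 1) sol.f sol.v sol.g :=
  ⟨sol.f_prob, sol.g_prob, sol.v_cont, sol.g_cont, sol.transport⟩

def IsTransportOn.toSolution (h : IsTransportOn G (Icc 0 1) f v g) : TransportSolution G :=
  ⟨f, v, g, h.f_prob, h.g_prob, h.v_cont, h.g_cont, h.transport⟩

lemma TransportSolution.Iq_nonneg (sol : TransportSolution G) (q : ℝ) :
    0 ≤ Iq q sol.v sol.g :=
  _root_.Iq_nonneg fun t ht => (sol.g_prob t ht).1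

lemma isTransportOn_stationary {p : V → ℝ} {g₀ g₁ : E → ℝ} (hp : IsProbDist p)
    (hg₀ : IsProbDist g₀) (hg₁ : IsProbDist g₁) :
    IsTransportOn G (Icc 0 1) (fun _ => p) 0 (fun t => (1 - t) • g₀ + t • g₁) :=
  ⟨fun _ _ => hp, fun _ ht => hg₀.convexComb hg₁ ht, continuousOn_const, by fun_prop,
    fun x t _ => by simpa using hasDerivWithinAt_const t _ (p x)⟩

lemma exists_isTransportOn_convexComb [Nonempty E] (hconn : G.toSimpleGraph.Connected)
    {f₀ f₁ : V → ℝ} (h₀ : IsProbDist f₀) (h₁ : IsProbDist f₁) :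
    ∃ v g : ℝ → E → ℝ, IsTransportOn G (Icc 0 1) (fun t => (1 - t) • f₀ + t • f₁) v g := by
  obtain ⟨u, hu⟩ := G.exists_flow hconn (f₁ - f₀) (by simp [Finset.sum_sub_distrib, h₀.2, h₁.2])
  refine ⟨fun _ => (Fintype.card E : ℝ) • u, fun _ _ => (Fintype.card E : ℝ)⁻¹,
    ⟨fun _ ht => h₀.convexComb h₁ ht, fun _ _ => isProbDist_uniform, continuousOn_const,
      continuousOn_const, fun x t _ => ?_⟩⟩
  have hrate : ∑ k, G.incidence x k * ((Fintype.card E : ℝ) • u) k * (Fintype.card E : ℝ)⁻¹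
      = f₁ x - f₀ x := by
    rw [← Pi.sub_apply, ← hu x]
    exact Finset.sum_congr rfl fun k _ => by
      simp only [Pi.smul_apply, smul_eq_mul]
      field_simp
  rw [hrate]
  have := (((hasDerivAt_id t).const_sub 1).mul_const (f₀ x)).fun_add
    ((hasDerivAt_id t).mul_const (f₁ x))
  simpa [sub_eq_neg_add] using this.hasDerivWithinAt

lemma exists_transportSolution [Nonempty E] (hconn : G.toSimpleGraph.Connected)
    {f₀ f₁ : V → ℝ} (h₀ : IsProbDist f₀) (h₁ : IsProbDist f₁) :
    ∃ sol : TransportSolution G, sol.f 0 = f₀ ∧ sol.f 1 = f₁ := by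
  obtain ⟨v, g, h⟩ := exists_isTransportOn_convexComb hconn h₀ h₁
  exact ⟨h.toSolution, by simp [IsTransportOn.toSolution], by simp [IsTransportOn.toSolution]⟩

noncomputable def TransportSolution.reverse (sol : TransportSolution G) : TransportSolution G :=
  (sol.isTransportOn.comp (τ := fun t => 1 - t) (c := fun _ => -1)
    (fun t _ => ((hasDerivAt_id t).const_sub 1).hasDerivWithinAt) continuousOn_const
    fun _ ht => ⟨by linarith [ht.2], by linarith [ht.1]⟩).toSolution

lemma TransportSolution.reverse_f (sol : TransportSolution G) (t : ℝ) :
    sol.reverse.f t = sol.f (1 - t) := rfl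

lemma TransportSolution.Iq_reverse (sol : TransportSolution G) (q : ℝ) :
    Iq q sol.reverse.v sol.reverse.g = Iq q sol.v sol.g := by
  have h := integral_comp_sub_left (a := 0) (b := 1) (costDensity q sol.v sol.g) 1
  simp only [sub_self, sub_zero] at h
  simpa [Iq, costDensity, reverse, IsTransportOn.toSolution] using congrArg (· ^ (1 / q)) h

end Solutions

lemma rpow_intervalIntegral_le_intervalIntegral_rpow {q : ℝ} (hq : 1 ≤ q) {h : ℝ → ℝ}
    (hc : ContinuousOn h (Icc 0 1)) (h0 : ∀ t ∈ Icc (0:ℝ) 1, 0 ≤ h t) :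
    (∫ t in (0:ℝ)..1, h t) ^ q ≤ ∫ t in (0:ℝ)..1, h t ^ q := by
  have : IsProbabilityMeasure (volume.restrict (Ioc (0:ℝ) 1)) := ⟨by simp⟩
  have hcq : ContinuousOn (fun x : ℝ => x ^ q) (Ici 0) :=
    (Real.continuous_rpow_const (by linarith)).continuousOn
  simp only [integral_of_le zero_le_one]
  exact (convexOn_rpow hq).map_integral_le hcq isClosed_Ici
    (ae_restrict_of_forall_mem measurableSet_Ioc fun t ht => h0 t (Ioc_subset_Icc_self ht))
    (hc.integrableOn_Icc.mono_set Ioc_subset_Icc_self)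
    ((hcq.comp hc fun t ht => h0 t ht).integrableOn_Icc.mono_set Ioc_subset_Icc_self)

section Vq

variable {V E : Type*} [Fintype V] [Fintype E] [DecidableEq V] {G : DiGraph V E} {q : ℝ}
  {f₀ f₁ : V → ℝ}

lemma abs_sum_incidence_mul_le (sol : TransportSolution G) (x : V) {t : ℝ}
    (ht : t ∈ Icc (0:ℝ) 1) :
    |∑ k, G.incidence x k * sol.v t k * sol.g t k| ≤ costDensity 1 sol.v sol.g t := by
  refine (Finset.abs_sum_le_sum_abs _ _).trans (Finset.sum_le_sum fun k _ => ?_)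
  have hg := (sol.g_prob t ht).1 k
  have hω : |G.incidence x k| ≤ 1 := by unfold DiGraph.incidence; split_ifs <;> norm_num
  rw [abs_mul, abs_mul, abs_of_nonneg hg, mul_comm (sol.g t k), Real.rpow_one]
  exact mul_le_mul_of_nonneg_right (mul_le_of_le_one_left (abs_nonneg _) hω) hg

lemma TransportSolution.abs_sub_le_integral (sol : TransportSolution G) (x : V) :
    |sol.f 1 x - sol.f 0 x| ≤ ∫ t in (0:ℝ)..1, costDensity 1 sol.v sol.g t := by
  have hrate : ContinuousOn (fun t => ∑ k, G.incidence x k * sol.v t k * sol.g t k) (Icc 0 1) :=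
    continuousOn_finsetSum _ fun k _ =>
      (continuousOn_const.mul ((continuous_apply k).comp_continuousOn sol.v_cont)).mul
        ((continuous_apply k).comp_continuousOn sol.g_cont)
  rw [← integral_eq_sub_of_hasDeriv_right_of_le zero_le_one
    (fun t ht => (sol.transport x t ht).continuousWithinAt)
    (fun t ht => ((sol.transport x t (Ioo_subset_Icc_self ht)).hasDerivAt
      (Icc_mem_nhds ht.1 ht.2)).hasDerivWithinAt)
    (hrate.intervalIntegrable_of_Icc zero_le_one)]
  exact (abs_integral_le_integral_abs zero_le_one).trans (integral_mono_on zero_le_one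
    (hrate.abs.intervalIntegrable_of_Icc zero_le_one)
    ((sol.v_cont.costDensity zero_le_one sol.g_cont).intervalIntegrable_of_Icc zero_le_one)
    fun t ht => abs_sum_incidence_mul_le sol x ht)

-- Jensen's inequality twice: over the edges with weights `g t`, then over time.
lemma TransportSolution.abs_sub_le_Iq (hq : 1 ≤ q) (sol : TransportSolution G) (x : V) :
    |sol.f 1 x - sol.f 0 x| ≤ Iq q sol.v sol.g := by
  have hq0 : 0 < q := by linarith
  have hD₁ := sol.v_cont.costDensity zero_le_one sol.g_cont
  have hD₁_nonneg : ∀ t ∈ Icc (0:ℝ) 1, 0 ≤ costDensity 1 sol.v sol.g t := fun t ht =>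
    costDensity_nonneg (sol.g_prob t ht).1
  calc |sol.f 1 x - sol.f 0 x| = (|sol.f 1 x - sol.f 0 x| ^ q) ^ (1 / q) := by
        rw [one_div, Real.rpow_rpow_inv (abs_nonneg _) hq0.ne']
    _ ≤ (∫ t in (0:ℝ)..1, costDensity q sol.v sol.g t) ^ (1 / q) := by
        gcongr
        calc |sol.f 1 x - sol.f 0 x| ^ q
            ≤ (∫ t in (0:ℝ)..1, costDensity 1 sol.v sol.g t) ^ q := by
              gcongr
              exact sol.abs_sub_le_integral x
          _ ≤ ∫ t in (0:ℝ)..1, costDensity 1 sol.v sol.g t ^ q :=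
              rpow_intervalIntegral_le_intervalIntegral_rpow hq hD₁ hD₁_nonneg
          _ ≤ ∫ t in (0:ℝ)..1, costDensity q sol.v sol.g t :=
              integral_mono_on zero_le_one
                ((Real.continuous_rpow_const hq0.le).comp_continuousOn hD₁
                  |>.intervalIntegrable_of_Icc zero_le_one)
                ((sol.v_cont.costDensity hq0.le sol.g_cont).intervalIntegrable_of_Icc zero_le_one)
                fun t ht => costDensity_one_rpow_le hq (sol.g_prob t ht)

lemma Vq_le_Iq (sol : TransportSolution G) : Vq G q (sol.f 0) (sol.f 1) ≤ Iq q sol.v sol.g :=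
  csInf_le ⟨0, by rintro _ ⟨s, -, -, rfl⟩; exact s.Iq_nonneg q⟩ ⟨sol, rfl, rfl, rfl⟩

lemma Vq_nonneg : 0 ≤ Vq G q f₀ f₁ :=
  Real.sInf_nonneg (by rintro _ ⟨s, -, -, rfl⟩; exact s.Iq_nonneg q)

lemma Vq_comm : Vq G q f₀ f₁ = Vq G q f₁ f₀ := by
  have hsub (f₀ f₁ : V → ℝ) : {c | ∃ sol : TransportSolution G,
      sol.f 0 = f₀ ∧ sol.f 1 = f₁ ∧ c = Iq q sol.v sol.g} ⊆ {c | ∃ sol : TransportSolution G,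
      sol.f 0 = f₁ ∧ sol.f 1 = f₀ ∧ c = Iq q sol.v sol.g} := by
    rintro _ ⟨sol, rfl, rfl, rfl⟩
    exact ⟨sol.reverse, by simp [sol.reverse_f], by simp [sol.reverse_f], (sol.Iq_reverse q).symm⟩
  rw [Vq, (hsub f₀ f₁).antisymm (hsub f₁ f₀), Vq]

lemma Vq_self [Nonempty E] (hq : q ≠ 0) {p : V → ℝ} (hp : IsProbDist p) : Vq G q p p = 0 := by
  refine le_antisymm ?_ Vq_nonneg
  have hstat := isTransportOn_stationary (G := G) hp isProbDist_uniform isProbDist_uniform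
  refine (Vq_le_Iq hstat.toSolution).trans_eq ?_
  simp [IsTransportOn.toSolution, Iq, hq]

lemma Vq_of_isEmpty [IsEmpty E] : Vq G q f₀ f₁ = 0 := by
  have : IsEmpty (TransportSolution G) :=
    ⟨fun sol => isEmptyElim (sol.g_prob 0 (left_mem_Icc.2 zero_le_one)).nonempty.some⟩
  simp [Vq]

lemma abs_sub_le_Vq [Nonempty E] (hq : 1 ≤ q) (hconn : G.toSimpleGraph.Connected)
    (h₀ : IsProbDist f₀) (h₁ : IsProbDist f₁) (x : V) : |f₁ x - f₀ x| ≤ Vq G q f₀ f₁ := by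
  obtain ⟨sol, hs₀, hs₁⟩ := exists_transportSolution hconn h₀ h₁
  refine le_csInf ⟨_, sol, hs₀, hs₁, rfl⟩ ?_
  rintro _ ⟨sol, rfl, rfl, rfl⟩
  exact sol.abs_sub_le_Iq hq x

lemma eq_of_Vq_eq_zero [Nonempty E] (hq : 1 ≤ q) (hconn : G.toSimpleGraph.Connected)
    (h₀ : IsProbDist f₀) (h₁ : IsProbDist f₁) (h : Vq G q f₀ f₁ = 0) : f₀ = f₁ := by
  funext x
  have := abs_sub_le_Vq hq hconn h₀ h₁ x
  rw [h, abs_nonpos_iff, sub_eq_zero] at this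
  exact this.symm

lemma exists_Iq_lt_Vq_add [Nonempty E] (hconn : G.toSimpleGraph.Connected)
    (h₀ : IsProbDist f₀) (h₁ : IsProbDist f₁) {ε : ℝ} (hε : 0 < ε) :
    ∃ sol : TransportSolution G,
      sol.f 0 = f₀ ∧ sol.f 1 = f₁ ∧ Iq q sol.v sol.g < Vq G q f₀ f₁ + ε := by
  obtain ⟨sol, hs₀, hs₁⟩ := exists_transportSolution hconn h₀ h₁
  have hne : {c | ∃ sol : TransportSolution G,
      sol.f 0 = f₀ ∧ sol.f 1 = f₁ ∧ c = Iq q sol.v sol.g}.Nonempty := ⟨_, sol, hs₀, hs₁, rfl⟩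
  obtain ⟨_, ⟨s, hs₀, hs₁, rfl⟩, hlt⟩ :=
    exists_lt_of_csInf_lt hne (lt_add_of_pos_right (Vq G q f₀ f₁) hε)
  exact ⟨s, hs₀, hs₁, hlt⟩

end Vq

section EaseInOut

-- The speed is proportional to `1 - (2s - 1)^(2n)`, normalized to have integral `1` over `[0, 1]`;
-- its maximum `1 + 1/(2n)` tends to `1`.

noncomputable def easeInOutDeriv (n : ℕ) (s : ℝ) : ℝ :=
  (1 + (2 * n : ℝ)⁻¹) * (1 - (2 * s - 1) ^ (2 * n))

noncomputable def easeInOut (n : ℕ) (s : ℝ) : ℝ :=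
  (1 + (2 * n : ℝ)⁻¹) * (s - ((2 * s - 1) ^ (2 * n + 1) + 1) / (2 * (2 * n + 1)))

variable {n : ℕ}

lemma hasDerivAt_easeInOut (n : ℕ) (s : ℝ) : HasDerivAt (easeInOut n) (easeInOutDeriv n s) s := by
  have hpow := (((hasDerivAt_id' s).const_mul 2).sub_const 1).fun_pow (2 * n + 1)
  refine (((hasDerivAt_id' s).fun_sub ((hpow.add_const 1).div_const (2 * (2 * n + 1)))).const_mul
    (1 + (2 * n : ℝ)⁻¹)).congr_deriv ?_
  simp only [easeInOutDeriv, Nat.add_sub_cancel]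
  push_cast
  field_simp

lemma easeInOutDeriv_zero : easeInOutDeriv n 0 = 0 := by simp [easeInOutDeriv, pow_mul]

lemma easeInOutDeriv_one : easeInOutDeriv n 1 = 0 := by norm_num [easeInOutDeriv]

lemma isTimeChange_easeInOut (hn : n ≠ 0) :
    IsTimeChange 0 1 (easeInOut n) (easeInOutDeriv n) (1 + (2 * n : ℝ)⁻¹) := by
  have hbound (s : ℝ) : 0 ≤ (2 * s - 1) ^ (2 * n) := by rw [pow_mul]; positivity
  refine ⟨zero_le_one, fun s _ => hasDerivAt_easeInOut n s, ?_, ?_, ?_, fun s hs => ?_,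
    fun s _ => mul_le_of_le_one_right (by positivity) (by linarith [hbound s])⟩
  · exact (continuous_const.mul (continuous_const.sub (by fun_prop))).continuousOn
  · simp [easeInOut, pow_succ, pow_mul]
  · have : (n : ℝ) ≠ 0 := Nat.cast_ne_zero.2 hn
    simp only [easeInOut]
    norm_num
    field_simp
    ring
  · refine mul_nonneg (by positivity) (sub_nonneg.2 ?_)
    rw [pow_mul]
    exact pow_le_one₀ (sq_nonneg _) (by nlinarith [hs.1, hs.2])

end EaseInOut

lemma div_div_rpow_mul_rpow_le {q M A α K : ℝ} (hq : 1 ≤ q) (hM : 0 ≤ M) (hA : 0 ≤ A)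
    (hAα : A ≤ α) (hα : 0 < α) (hK : 0 < K) :
    (M / (α / K)) ^ (q - 1) * A ^ q ≤ (M * K) ^ (q - 1) * α := calc
  (M / (α / K)) ^ (q - 1) * A ^ q ≤ (M * K / α) ^ (q - 1) * α ^ q := by
    rw [div_div_eq_mul_div]
    gcongr
  _ = (M * K) ^ (q - 1) * α := by
    rw [Real.div_rpow (by positivity) hα.le, div_mul_eq_mul_div, mul_div_assoc,
      ← Real.rpow_sub hα, sub_sub_cancel, Real.rpow_one]

section Triangle

variable {V E : Type*} [Fintype V] [Fintype E] [DecidableEq V] {G : DiGraph V E} {q : ℝ}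

/-- Run `sol₁` on `[0, a]`, rest on `[a, d]` while the edge weights move from `sol₁.g 1` to
`sol₂.g 0`, and run `sol₂` on `[d, 1]`; the time change `θ` has zero speed at both ends, so the
velocities vanish at the junctions and the pieces fit together continuously. -/
lemma exists_concat_Iq_rpow_le (hq : 1 ≤ q) (sol₁ sol₂ : TransportSolution G)
    (hmid : sol₁.f 1 = sol₂.f 0) {θ θ' : ℝ → ℝ} {M : ℝ} (hθ : IsTimeChange 0 1 θ θ' M)
    (hθ₀ : θ' 0 = 0) (hθ₁ : θ' 1 = 0) {a d : ℝ} (ha : 0 < a) (had : a < d) (hd : d < 1) :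
    ∃ sol : TransportSolution G, sol.f 0 = sol₁.f 0 ∧ sol.f 1 = sol₂.f 1 ∧
      Iq q sol.v sol.g ^ q ≤ (M / a) ^ (q - 1) * Iq q sol₁.v sol₁.g ^ q
        + (M / (1 - d)) ^ (q - 1) * Iq q sol₂.v sol₂.g ^ q := by
  have hq0 : 0 < q := by linarith
  have h₀₁ : (0:ℝ) ∈ Icc (0:ℝ) 1 := left_mem_Icc.2 zero_le_one
  have h₁₁ : (1:ℝ) ∈ Icc (0:ℝ) 1 := right_mem_Icc.2 zero_le_one
  have hτ₁ : IsTimeChange 0 a (fun t => θ (t / a)) (fun t => θ' (t / a) / a) (M / a) := by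
    simpa using hθ.affine ha
  have hτ₃ := hθ.affine hd
  have hrest := isTransportOn_stationary (G := G) (sol₁.f_prob 1 h₁₁) (sol₁.g_prob 1 h₁₁)
    (sol₂.g_prob 0 h₀₁)
  have hp₁ := sol₁.isTransportOn.timeChange hτ₁
  have hp₂ := hrest.timeChange (isTimeChange_id.affine had)
  have hp₃ := sol₂.isTransportOn.timeChange hτ₃
  have hda : d - a ≠ 0 := sub_ne_zero.2 had.ne'
  have hd1 : 1 - d ≠ 0 := sub_ne_zero.2 hd.ne'
  have hp₁₂ := hp₁.splice hp₂ (by simp [ha.ne', hθ.map_right]) (by simp [ha.ne', hθ₁])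
    (by simp [ha.ne', hθ.map_right]) ha.le had.le
  have hp := hp₁₂.splice hp₃ (by simp [splice_of_lt had, hmid, hθ.map_left])
    (by simp [splice_of_lt had, hθ₀]) (by simp [splice_of_lt had, hda, hθ.map_left])
    (ha.le.trans had.le) hd.le
  refine ⟨hp.toSolution, by simp [IsTransportOn.toSolution, splice, ha.le, (ha.trans had).le,
    hθ.map_left], by simp [IsTransportOn.toSolution, splice_of_lt hd, hd1, hθ.map_right], ?_⟩
  rw [Iq_rpow hq0.ne' fun t ht => (hp.toSolution.g_prob t ht).1,
    Iq_rpow hq0.ne' fun t ht => (sol₁.g_prob t ht).1,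
    Iq_rpow hq0.ne' fun t ht => (sol₂.g_prob t ht).1]
  simp only [IsTransportOn.toSolution]
  rw [IsTransportOn.integral_costDensity_splice hq0.le hp₁₂ hp₃ (ha.trans had).le hd.le,
    IsTransportOn.integral_costDensity_splice hq0.le hp₁ hp₂ ha.le had.le]
  have hrest_cost : ∫ t in a..d, costDensity q
      (fun t => (1 / (d - a)) • (0 : ℝ → E → ℝ) ((t - a) / (d - a)))
      (fun t => (1 - (t - a) / (d - a)) • sol₁.g 1 + ((t - a) / (d - a)) • sol₂.g 0) t = 0 := by
    simp [costDensity, Real.zero_rpow hq0.ne']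
  rw [hrest_cost, add_zero]
  exact add_le_add (sol₁.isTransportOn.integral_costDensity_timeChange_le hq hτ₁)
    (sol₂.isTransportOn.integral_costDensity_timeChange_le hq hτ₃)

lemma Vq_rpow_le_of_timeChange (hq : 1 ≤ q) (sol₁ sol₂ : TransportSolution G)
    (hmid : sol₁.f 1 = sol₂.f 0) {θ θ' : ℝ → ℝ} {M : ℝ} (hθ : IsTimeChange 0 1 θ θ' M)
    (hθ₀ : θ' 0 = 0) (hθ₁ : θ' 1 = 0) {a d : ℝ} (ha : 0 < a) (had : a < d) (hd : d < 1) :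
    Vq G q (sol₁.f 0) (sol₂.f 1) ^ q
      ≤ (M / a) ^ (q - 1) * Iq q sol₁.v sol₁.g ^ q
        + (M / (1 - d)) ^ (q - 1) * Iq q sol₂.v sol₂.g ^ q := by
  obtain ⟨sol, hs₀, hs₁, hcost⟩ :=
    exists_concat_Iq_rpow_le hq sol₁ sol₂ hmid hθ hθ₀ hθ₁ ha had hd
  rw [← hs₀, ← hs₁]
  exact (Real.rpow_le_rpow Vq_nonneg (Vq_le_Iq sol) (by linarith)).trans hcost

lemma Vq_le_mul_add_of_timeChange (hq : 1 ≤ q) (sol₁ sol₂ : TransportSolution G)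
    (hmid : sol₁.f 1 = sol₂.f 0) {θ θ' : ℝ → ℝ} {M : ℝ} (hθ : IsTimeChange 0 1 θ θ' M)
    (hθ₀ : θ' 0 = 0) (hθ₁ : θ' 1 = 0) (hM : 1 ≤ M) :
    Vq G q (sol₁.f 0) (sol₂.f 1) ≤ M * (Iq q sol₁.v sol₁.g + Iq q sol₂.v sol₂.g) := by
  set A := Iq q sol₁.v sol₁.g
  set B := Iq q sol₂.v sol₂.g
  have hA := sol₁.Iq_nonneg q
  have hB := sol₂.Iq_nonneg q
  have hq0 : 0 < q := by linarith
  have hbound (σ : ℝ) (hσ : 0 < σ) : Vq G q (sol₁.f 0) (sol₂.f 1) ≤ M * (A + B + 3 * σ) := by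
    set K := A + B + 3 * σ
    have hK : 0 < K := by positivity
    have hglue := Vq_rpow_le_of_timeChange hq sol₁ sol₂ hmid hθ hθ₀ hθ₁
      (a := (A + σ) / K) (d := 1 - (B + σ) / K) (by positivity)
      (by rw [lt_sub_iff_add_lt, ← add_div, div_lt_one hK]; linarith)
      (sub_lt_self _ (by positivity))
    rw [sub_sub_cancel] at hglue
    refine (Real.rpow_le_rpow_iff Vq_nonneg (by positivity) hq0).1 (hglue.trans ?_)
    calc (M / ((A + σ) / K)) ^ (q - 1) * A ^ q + (M / ((B + σ) / K)) ^ (q - 1) * B ^ q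
        ≤ (M * K) ^ (q - 1) * (A + σ) + (M * K) ^ (q - 1) * (B + σ) :=
          add_le_add
            (div_div_rpow_mul_rpow_le hq (by linarith) hA (by linarith) (by positivity) hK)
            (div_div_rpow_mul_rpow_le hq (by linarith) hB (by linarith) (by positivity) hK)
      _ ≤ (M * K) ^ (q - 1) * (M * K) := by
          rw [← mul_add]
          gcongr
          nlinarith
      _ = (M * K) ^ q := by rw [← Real.rpow_add_one (by positivity), sub_add_cancel]
  have hlim : Tendsto (fun σ => M * (A + B + 3 * σ)) (𝓝[>] 0) (𝓝 (M * (A + B))) := by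
    have hc : Continuous fun σ : ℝ => M * (A + B + 3 * σ) := by fun_prop
    simpa using (hc.tendsto 0).mono_left nhdsWithin_le_nhds
  exact ge_of_tendsto hlim (eventually_nhdsWithin_of_forall hbound)

lemma Vq_triangle [Nonempty E] (hq : 1 ≤ q) (hconn : G.toSimpleGraph.Connected)
    {f₀ f₁ f₂ : V → ℝ} (h₀ : IsProbDist f₀) (h₁ : IsProbDist f₁) (h₂ : IsProbDist f₂) :
    Vq G q f₀ f₂ ≤ Vq G q f₀ f₁ + Vq G q f₁ f₂ := by
  refine le_of_forall_pos_lt_add fun ε hε => ?_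
  obtain ⟨sol₁, hs₁₀, hs₁₁, hlt₁⟩ := exists_Iq_lt_Vq_add (q := q) hconn h₀ h₁ (half_pos hε)
  obtain ⟨sol₂, hs₂₀, hs₂₁, hlt₂⟩ := exists_Iq_lt_Vq_add (q := q) hconn h₁ h₂ (half_pos hε)
  set S := Iq q sol₁.v sol₁.g + Iq q sol₂.v sol₂.g
  have hbound (n : ℕ) (hn : n ≠ 0) : Vq G q f₀ f₂ ≤ (1 + (2 * n : ℝ)⁻¹) * S := by
    rw [← hs₁₀, ← hs₂₁]
    exact Vq_le_mul_add_of_timeChange hq sol₁ sol₂ (hs₁₁.trans hs₂₀.symm)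
      (isTimeChange_easeInOut hn) easeInOutDeriv_zero easeInOutDeriv_one
      (le_add_of_nonneg_right (by positivity))
  have hlim : Tendsto (fun n : ℕ => (1 + (2 * n : ℝ)⁻¹) * S) atTop (𝓝 S) := by
    have h := tendsto_inv_atTop_zero.comp
      (tendsto_natCast_atTop_atTop.const_mul_atTop (two_pos : (0:ℝ) < 2))
    simpa using ((tendsto_const_nhds (x := (1:ℝ))).add h).mul_const S
  have hS : Vq G q f₀ f₂ ≤ S := ge_of_tendsto hlim ((eventually_ne_atTop 0).mono hbound)
  linarith

end Triangle

/-- `V_q` is a metric on probability distributions on `V`. -/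
theorem statement15 {V E : Type*} [Fintype V] [Fintype E] [DecidableEq V]
    (G : DiGraph V E) (hconn : G.toSimpleGraph.Connected)
    (q : ℝ) (hq : 1 ≤ q) :
    ∀ f0 f1 f2 : V → ℝ, IsProbDist f0 → IsProbDist f1 → IsProbDist f2 →
      (0 ≤ Vq G q f0 f1) ∧
      (Vq G q f0 f1 = 0 ↔ f0 = f1) ∧
      (Vq G q f0 f1 = Vq G q f1 f0) ∧
      (Vq G q f0 f2 ≤ Vq G q f0 f1 + Vq G q f1 f2) := by
  intro f0 f1 f2 h0 h1 h2
  rcases isEmpty_or_nonempty E with hE | hE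
  · have := subsingleton_of_connected_of_isEmpty hconn
    simp only [Vq_of_isEmpty, le_refl, add_zero, true_iff, and_true, true_and]
    exact h0.eq_of_subsingleton h1
  · exact ⟨Vq_nonneg, ⟨eq_of_Vq_eq_zero hq hconn h0 h1, fun h => h ▸ Vq_self (zero_lt_one.trans_le hq).ne' h0⟩,
      Vq_comm, Vq_triangle hq hconn h0 h1 h2⟩
end

section
/- Let n ∈ ℕ and 0 ≤ p ≤ q ≤ 1. The Wasserstein-1 distance, with cost |x−y|, between the binomial distributions Bin(n,p) and Bin(n,q) on {0,1,…,n} equals n(q − p). -/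
/-!
Every coupling `π` of `f₀` and `f₁` has cost `∑ |x - y| π(x,y) ≥ ∑ (y - x) π(x,y) = E f₁ - E f₀`,
and the two means are `nq` and `np`. Equality holds for any coupling supported on `{x ≤ y}`;
one is obtained by running the `n` trials jointly, each succeeding for both laws with probability
`p`, only for `Bin(n,q)` with probability `q - p`, and for neither with probability `1 - q`.
-/

open scoped BigOperators
open Set

/-- The binomial distribution `Bin(n,p)` on `{0, 1, …, n}`. -/
noncomputable def binom (n : ℕ) (p : ℝ) (x : Fin (n + 1)) : ℝ :=
  (n.choose (x : ℕ) : ℝ) * p ^ (x : ℕ) * (1 - p) ^ (n - (x : ℕ))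

open Finset

section Coupling

variable {α : Type*} [Fintype α] (g : α → ℝ) {μ ν : α → ℝ} {π : α → α → ℝ}

theorem sum_sum_sub_mul_of_marginals (hμ : ∀ x, ∑ y, π x y = μ x) (hν : ∀ y, ∑ x, π x y = ν y) :
    ∑ x, ∑ y, (g y - g x) * π x y = ∑ y, g y * ν y - ∑ x, g x * μ x := by
  simp only [sub_mul, sum_sub_distrib, ← hμ, ← hν, mul_sum]
  rw [sum_comm (f := fun x y => g y * π x y)]

theorem sum_sub_mul_le_sum_abs_mul (hπ : ∀ x y, 0 ≤ π x y)
    (hμ : ∀ x, ∑ y, π x y = μ x) (hν : ∀ y, ∑ x, π x y = ν y) :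
    ∑ y, g y * ν y - ∑ x, g x * μ x ≤ ∑ x, ∑ y, |g x - g y| * π x y := by
  rw [← sum_sum_sub_mul_of_marginals g hμ hν]
  gcongr with x _ y _
  · exact hπ x y
  · rw [abs_sub_comm]; exact le_abs_self _

theorem sum_abs_mul_eq_of_monotone_support (hμ : ∀ x, ∑ y, π x y = μ x)
    (hν : ∀ y, ∑ x, π x y = ν y) (hsupp : ∀ x y, π x y ≠ 0 → g x ≤ g y) :
    ∑ x, ∑ y, |g x - g y| * π x y = ∑ y, g y * ν y - ∑ x, g x * μ x := by
  rw [← sum_sum_sub_mul_of_marginals g hμ hν]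
  refine sum_congr rfl fun x _ => sum_congr rfl fun y _ => ?_
  by_cases h : π x y = 0
  · simp [h]
  · rw [abs_sub_comm, abs_of_nonneg (sub_nonneg.2 (hsupp x y h))]

end Coupling

theorem binom_eq_eval_bernsteinPolynomial (n : ℕ) (p : ℝ) (x : Fin (n + 1)) :
    binom n p x = (bernsteinPolynomial ℝ n x).eval p := by
  simp [binom, bernsteinPolynomial]

theorem sum_mul_binom (n : ℕ) (p : ℝ) : ∑ x : Fin (n + 1), (x : ℝ) * binom n p x = n * p := by
  have h := congrArg (Polynomial.eval p) (bernsteinPolynomial.sum_smul (R := ℝ) n)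
  simp only [nsmul_eq_mul, Polynomial.eval_finsetSum, Polynomial.eval_mul, Polynomial.eval_natCast,
    Polynomial.eval_X] at h
  rw [← h, ← Fin.sum_univ_eq_sum_range (fun i => (i : ℝ) * (bernsteinPolynomial ℝ n i).eval p)]
  simp only [binom_eq_eval_bernsteinPolynomial]

/-- The law of `(X, Y)` with `(X, Y - X, n - Y) ~ Mult(n; p, q - p, 1 - q)`. -/
noncomputable def binomCoupling (n : ℕ) (p q : ℝ) (x y : ℕ) : ℝ :=
  if x ≤ y then
    (n.choose y : ℝ) * (y.choose x : ℝ) * p ^ x * (q - p) ^ (y - x) * (1 - q) ^ (n - y)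
  else 0

section binomCoupling

variable {n : ℕ} {p q : ℝ}

theorem binomCoupling_nonneg (hp : 0 ≤ p) (hpq : p ≤ q) (hq : q ≤ 1) (x y : ℕ) :
    0 ≤ binomCoupling n p q x y := by
  have : 0 ≤ q - p := sub_nonneg.2 hpq
  have : 0 ≤ 1 - q := sub_nonneg.2 hq
  unfold binomCoupling
  split <;> positivity

theorem le_of_binomCoupling_ne_zero {x y : ℕ} (h : binomCoupling n p q x y ≠ 0) : x ≤ y := by
  by_contra hxy
  exact h (if_neg hxy)

theorem sum_binomCoupling_right {x : ℕ} (hx : x ≤ n) :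
    ∑ y ∈ range (n + 1), binomCoupling n p q x y = n.choose x * p ^ x * (1 - p) ^ (n - x) := by
  have hIco : (range (n + 1)).filter (x ≤ ·) = Finset.Ico x (n + 1) := by
    ext y; simp only [mem_filter, Finset.mem_Ico, Finset.mem_range]; omega
  unfold binomCoupling
  rw [← sum_filter, hIco, sum_Ico_eq_sum_range, show n + 1 - x = n - x + 1 by omega,
    show 1 - p = q - p + (1 - q) by ring, add_pow, mul_sum]
  refine sum_congr rfl fun k hk => ?_
  have hk : k ≤ n - x := Nat.lt_succ_iff.1 (Finset.mem_range.1 hk)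
  have hchoose : (n.choose (x + k) : ℝ) * ((x + k).choose x : ℝ) =
      n.choose x * (n - x).choose k := by
    have h := Nat.choose_mul (n := n) (k := x + k) (s := x) (by omega)
    rw [Nat.add_sub_cancel_left] at h
    exact_mod_cast h
  rw [Nat.add_sub_cancel_left, show n - (x + k) = n - x - k by omega]
  linear_combination (p ^ x * (q - p) ^ k * (1 - q) ^ (n - x - k)) * hchoose

theorem sum_binomCoupling_left {y : ℕ} (hy : y ≤ n) :
    ∑ x ∈ range (n + 1), binomCoupling n p q x y = n.choose y * q ^ y * (1 - q) ^ (n - y) := by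
  have hrange : (range (n + 1)).filter (· ≤ y) = range (y + 1) := by
    ext x; simp only [mem_filter, Finset.mem_range]; omega
  unfold binomCoupling
  rw [← sum_filter, hrange, show q = p + (q - p) by ring, add_pow, mul_sum, sum_mul]
  refine sum_congr rfl fun x _ => ?_
  ring

end binomCoupling

/-- `W1(Bin(n,p), Bin(n,q)) = n (q − p)` for `0 ≤ p ≤ q ≤ 1`,
with cost `|x − y|`. -/
theorem statement17 (n : ℕ) (p q : ℝ) (hp : 0 ≤ p) (hpq : p ≤ q) (hq : q ≤ 1) :
    sInf {c : ℝ | ∃ π : Fin (n + 1) → Fin (n + 1) → ℝ,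
      (∀ x y, 0 ≤ π x y) ∧
      (∀ x : Fin (n + 1), ∑ y : Fin (n + 1), π x y = binom n p x) ∧
      (∀ y : Fin (n + 1), ∑ x : Fin (n + 1), π x y = binom n q y) ∧
      c = ∑ x : Fin (n + 1), ∑ y : Fin (n + 1),
            |((x : ℕ) : ℝ) - ((y : ℕ) : ℝ)| * π x y} = n * (q - p) := by
  have hmeans : ∑ y : Fin (n + 1), (y : ℝ) * binom n q y - ∑ x : Fin (n + 1), (x : ℝ) * binom n p x
      = n * (q - p) := by
    rw [sum_mul_binom, sum_mul_binom]; ring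
  refine IsLeast.csInf_eq ⟨?_, ?_⟩
  · set π : Fin (n + 1) → Fin (n + 1) → ℝ := fun x y => binomCoupling n p q x y
    have hμ : ∀ x, ∑ y, π x y = binom n p x := fun x => by
      rw [Fin.sum_univ_eq_sum_range (binomCoupling n p q x ·),
        sum_binomCoupling_right x.is_le, binom]
    have hν : ∀ y, ∑ x, π x y = binom n q y := fun y => by
      rw [Fin.sum_univ_eq_sum_range (binomCoupling n p q · y),
        sum_binomCoupling_left y.is_le, binom]
    refine ⟨π, fun x y => binomCoupling_nonneg hp hpq hq x y, hμ, hν, ?_⟩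
    rw [sum_abs_mul_eq_of_monotone_support (fun x : Fin (n + 1) => ((x : ℕ) : ℝ)) hμ hν
      fun x y h => Nat.cast_le.2 (le_of_binomCoupling_ne_zero h), hmeans]
  · rintro c ⟨π, hπ, hμ, hν, rfl⟩
    exact hmeans ▸ sum_sub_mul_le_sum_abs_mul (fun x : Fin (n + 1) => ((x : ℕ) : ℝ)) hπ hμ hν
end

section
/- Let 0 ≤ λ ≤ μ. The Wasserstein-1 distance, with cost |x−y|, between the Poisson distributions Poi(λ) and Poi(μ) on ℕ equals μ − λ. -/
open scoped BigOperators
open Set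

/-- The Poisson distribution on `ℕ` with parameter `l`. -/
noncomputable def poissonPMF (l : ℝ) (x : ℕ) : ℝ :=
  Real.exp (-l) * l ^ x / (Nat.factorial x : ℝ)

/-!
The coupling `(X, X + Y)` of `Poi(λ)` and `Poi(μ)`, with `X ∼ Poi(λ)` and `Y ∼ Poi(μ - λ)`
independent, moves mass only upwards, so its cost is `𝔼 Y = μ - λ`. Conversely, for any coupling
`π` we have `y ≤ x + |x - y|`, and integrating against `π` gives `μ ≤ λ + cost`: the first moments
bound the transport cost from below.
-/

section Poisson

lemma poissonPMF_nonneg {l : ℝ} (hl : 0 ≤ l) (x : ℕ) : 0 ≤ poissonPMF l x := by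
  unfold poissonPMF; positivity

lemma poissonPMF_pos {l : ℝ} (hl : 0 < l) (x : ℕ) : 0 < poissonPMF l x := by
  unfold poissonPMF; positivity

lemma hasSum_poissonPMF (l : ℝ) : HasSum (poissonPMF l) 1 := by
  have h := (Real.exp_eq_exp_ℝ ▸ NormedSpace.expSeries_div_hasSum_exp l).mul_left (Real.exp (-l))
  rw [← Real.exp_add, neg_add_cancel, Real.exp_zero] at h
  exact h.congr_fun fun n => by unfold poissonPMF; ring

lemma succ_mul_poissonPMF_succ (l : ℝ) (n : ℕ) :
    ((n + 1 : ℕ) : ℝ) * poissonPMF l (n + 1) = l * poissonPMF l n := by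
  unfold poissonPMF
  rw [Nat.factorial_succ]
  push_cast
  field_simp
  ring

lemma hasSum_mul_poissonPMF (l : ℝ) : HasSum (fun n : ℕ => (n : ℝ) * poissonPMF l n) l := by
  have h : HasSum (fun n : ℕ => ((n + 1 : ℕ) : ℝ) * poissonPMF l (n + 1)) l := by
    simpa only [succ_mul_poissonPMF_succ, mul_one] using (hasSum_poissonPMF l).mul_left l
  simpa using (hasSum_nat_add_iff (f := fun n : ℕ => (n : ℝ) * poissonPMF l n) 1).mp h

lemma sum_range_poissonPMF_mul_poissonPMF (a b : ℝ) (y : ℕ) :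
    ∑ x ∈ Finset.range (y + 1), poissonPMF a x * poissonPMF b (y - x) = poissonPMF (a + b) y := by
  unfold poissonPMF
  rw [neg_add, Real.exp_add, add_pow, Finset.mul_sum, Finset.sum_div]
  refine Finset.sum_congr rfl fun x hx => ?_
  have hxy : x ≤ y := Nat.lt_succ_iff.mp (Finset.mem_range.mp hx)
  have hchoose : (y.choose x : ℝ) ≠ 0 := by exact_mod_cast (Nat.choose_pos hxy).ne'
  rw [← Nat.choose_mul_factorial_mul_factorial hxy]
  push_cast
  field_simp

end Poisson

section Coupling

/-- The law of `(X, X + Y)` for independent `X ∼ Poi(λ)` and `Y ∼ Poi(μ - λ)`. -/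
noncomputable def poissonCoupling (lam mu : ℝ) (x y : ℕ) : ℝ :=
  if x ≤ y then poissonPMF lam x * poissonPMF (mu - lam) (y - x) else 0

lemma poissonCoupling_nonneg {lam mu : ℝ} (hlam : 0 ≤ lam) (hle : lam ≤ mu) (x y : ℕ) :
    0 ≤ poissonCoupling lam mu x y := by
  unfold poissonCoupling
  split_ifs
  · exact mul_nonneg (poissonPMF_nonneg hlam x) (poissonPMF_nonneg (sub_nonneg.mpr hle) _)
  · rfl

lemma hasSum_mul_poissonCoupling_row {lam mu s : ℝ} {φ : ℕ → ℝ}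
    (hφ : HasSum (fun n => φ n * poissonPMF (mu - lam) n) s) (x : ℕ) :
    HasSum (fun y => φ (y - x) * poissonCoupling lam mu x y) (poissonPMF lam x * s) := by
  rw [← (add_left_injective x).hasSum_iff]
  · simpa [Function.comp_def, poissonCoupling, mul_left_comm] using hφ.mul_left (poissonPMF lam x)
  · intro y hy
    have hxy : ¬ x ≤ y := fun h => hy ⟨y - x, Nat.sub_add_cancel h⟩
    simp [poissonCoupling, hxy]

lemma hasSum_poissonCoupling_row (lam mu : ℝ) (x : ℕ) :
    HasSum (poissonCoupling lam mu x) (poissonPMF lam x) := by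
  have h := hasSum_mul_poissonCoupling_row (lam := lam) (φ := fun _ => 1)
    (by simpa using hasSum_poissonPMF (mu - lam)) x
  simpa only [one_mul, mul_one] using h

lemma tsum_poissonCoupling_col (lam mu : ℝ) (y : ℕ) :
    ∑' x, poissonCoupling lam mu x y = poissonPMF mu y := by
  have hconv := sum_range_poissonPMF_mul_poissonPMF lam (mu - lam) y
  rw [add_sub_cancel] at hconv
  rw [← hconv, tsum_eq_sum (s := Finset.range (y + 1))]
  · refine Finset.sum_congr rfl fun x hx => ?_
    simp [poissonCoupling, Nat.lt_succ_iff.mp (Finset.mem_range.mp hx)]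
  · intro x hx
    have hxy : ¬ x ≤ y := by simpa [Nat.lt_succ_iff] using hx
    simp [poissonCoupling, hxy]

lemma abs_sub_mul_poissonCoupling (lam mu : ℝ) (x y : ℕ) :
    |(x : ℝ) - y| * poissonCoupling lam mu x y =
      ((y - x : ℕ) : ℝ) * poissonCoupling lam mu x y := by
  unfold poissonCoupling
  split_ifs with h
  · rw [Nat.cast_sub h, abs_sub_comm, abs_of_nonneg (sub_nonneg.mpr (Nat.cast_le.mpr h))]
  · simp

lemma tsum_abs_sub_mul_poissonCoupling (lam mu : ℝ) :
    ∑' (x : ℕ) (y : ℕ), |(x : ℝ) - y| * poissonCoupling lam mu x y = mu - lam := by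
  simp_rw [abs_sub_mul_poissonCoupling,
    fun x : ℕ => (hasSum_mul_poissonCoupling_row (hasSum_mul_poissonPMF (mu - lam)) x).tsum_eq]
  simpa using ((hasSum_poissonPMF lam).mul_right (mu - lam)).tsum_eq

end Coupling

section LowerBound

variable {α β : Type*}

lemma hasSum_prod_of_nonneg_of_rows {F : α × β → ℝ} (hF : 0 ≤ F) {u : α → ℝ} {s : ℝ}
    (hrow : ∀ x, HasSum (fun y => F (x, y)) (u x)) (hu : HasSum u s) : HasSum F s := by
  have hsum : Summable F := (summable_prod_of_nonneg hF).2
    ⟨fun x => (hrow x).summable, by simpa only [(hrow _).tsum_eq] using hu.summable⟩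
  convert hsum.hasSum
  rw [hsum.tsum_prod, ← hu.tsum_eq]
  exact tsum_congr fun x => (hrow x).tsum_eq.symm

lemma hasSum_prod_of_nonneg_of_cols {F : α × β → ℝ} (hF : 0 ≤ F) {v : β → ℝ} {s : ℝ}
    (hcol : ∀ y, HasSum (fun x => F (x, y)) (v y)) (hv : HasSum v s) : HasSum F s :=
  (Equiv.prodComm β α).hasSum_iff.mp
    (hasSum_prod_of_nonneg_of_rows (F := fun p => F p.swap) (fun _ => hF _) hcol hv)

lemma sub_le_tsum_abs_sub_mul {π : ℕ → ℕ → ℝ} (hπ : ∀ x y, 0 ≤ π x y) {f g : ℕ → ℝ} {a b : ℝ}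
    (hrow : ∀ x, HasSum (π x) (f x)) (hcol : ∀ y, HasSum (fun x => π x y) (g y))
    (ha : HasSum (fun x : ℕ => (x : ℝ) * f x) a) (hb : HasSum (fun y : ℕ => (y : ℝ) * g y) b) :
    b - a ≤ ∑' (x : ℕ) (y : ℕ), |(x : ℝ) - y| * π x y := by
  set X : ℕ × ℕ → ℝ := fun p => p.1 * π p.1 p.2
  set Y : ℕ × ℕ → ℝ := fun p => p.2 * π p.1 p.2
  set C : ℕ × ℕ → ℝ := fun p => |(p.1 : ℝ) - p.2| * π p.1 p.2
  have hX : HasSum X a := hasSum_prod_of_nonneg_of_rows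
    (fun p => mul_nonneg p.1.cast_nonneg (hπ _ _)) (fun x => (hrow x).mul_left (x : ℝ)) ha
  have hY : HasSum Y b := hasSum_prod_of_nonneg_of_cols
    (fun p => mul_nonneg p.2.cast_nonneg (hπ _ _)) (fun y => (hcol y).mul_left (y : ℝ)) hb
  have hC : Summable C := by
    refine (hX.summable.add hY.summable).of_nonneg_of_le
      (fun p => mul_nonneg (abs_nonneg _) (hπ _ _)) fun p => ?_
    show |(p.1 : ℝ) - p.2| * π p.1 p.2 ≤ p.1 * π p.1 p.2 + p.2 * π p.1 p.2
    rw [← add_mul]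
    refine mul_le_mul_of_nonneg_right ?_ (hπ _ _)
    have := p.1.cast_nonneg (α := ℝ)
    have := p.2.cast_nonneg (α := ℝ)
    exact abs_sub_le_iff.mpr ⟨by linarith, by linarith⟩
  have hYle : b ≤ a + ∑' p, C p := by
    refine hasSum_le (fun p => ?_) hY (hX.add hC.hasSum)
    show (p.2 : ℝ) * π p.1 p.2 ≤ p.1 * π p.1 p.2 + |(p.1 : ℝ) - p.2| * π p.1 p.2
    rw [← add_mul]
    refine mul_le_mul_of_nonneg_right ?_ (hπ _ _)
    linarith [le_abs_self ((p.2 : ℝ) - p.1), abs_sub_comm (p.1 : ℝ) p.2]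
  rw [hC.tsum_prod] at hYle
  linarith

lemma sub_le_tsum_abs_sub_mul_of_poisson_marginals {lam mu : ℝ} (hlam : 0 ≤ lam)
    {π : ℕ → ℕ → ℝ} (hπ : ∀ x y, 0 ≤ π x y) (hrow : ∀ x, ∑' y, π x y = poissonPMF lam x)
    (hcol : ∀ y, ∑' x, π x y = poissonPMF mu y) :
    mu - lam ≤ ∑' (x : ℕ) (y : ℕ), |(x : ℝ) - y| * π x y := by
  rcases le_or_gt mu 0 with hmu | hmu
  · have hcost : 0 ≤ ∑' (x : ℕ) (y : ℕ), |(x : ℝ) - y| * π x y :=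
      tsum_nonneg fun x => tsum_nonneg fun y => mul_nonneg (abs_nonneg _) (hπ x y)
    linarith
  -- `∑'` is `0` on non-summable families, so positive column sums force summability
  have hcol' : ∀ y, HasSum (fun x => π x y) (poissonPMF mu y) := fun y => by
    have hsum : Summable fun x => π x y := by
      by_contra h
      exact (poissonPMF_pos hmu y).ne' (hcol y ▸ tsum_eq_zero_of_not_summable h)
    exact hcol y ▸ hsum.hasSum
  have hπsum : Summable (Function.uncurry π) :=
    (hasSum_prod_of_nonneg_of_cols (fun p => hπ p.1 p.2) hcol' (hasSum_poissonPMF mu)).summable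
  have hrow' : ∀ x, HasSum (π x) (poissonPMF lam x) := fun x =>
    hrow x ▸ (hπsum.prod_factor x).hasSum
  exact sub_le_tsum_abs_sub_mul hπ hrow' hcol'
    (hasSum_mul_poissonPMF lam) (hasSum_mul_poissonPMF mu)

end LowerBound

/-- `W1(Poi(λ), Poi(μ)) = μ − λ` for `0 ≤ λ ≤ μ`,
with cost `|x − y|`. -/
theorem statement18 (lam mu : ℝ) (hlam : 0 ≤ lam) (hle : lam ≤ mu) :
    sInf {c : ℝ | ∃ π : ℕ → ℕ → ℝ,
      (∀ x y, 0 ≤ π x y) ∧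
      (∀ x, ∑' y, π x y = poissonPMF lam x) ∧
      (∀ y, ∑' x, π x y = poissonPMF mu y) ∧
      c = ∑' (x : ℕ), ∑' (y : ℕ), |(x : ℝ) - (y : ℝ)| * π x y} = mu - lam := by
  refine IsLeast.csInf_eq ⟨⟨poissonCoupling lam mu, poissonCoupling_nonneg hlam hle,
    fun x => (hasSum_poissonCoupling_row lam mu x).tsum_eq, tsum_poissonCoupling_col lam mu,
    (tsum_abs_sub_mul_poissonCoupling lam mu).symm⟩, ?_⟩
  rintro c ⟨π, hπ, hrow, hcol, rfl⟩
  exact sub_le_tsum_abs_sub_mul_of_poisson_marginals hlam hπ hrow hcol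
end
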